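/- arXiv:1910.12484 — 6 statements merged into one kernel-verified Lean document; each statement's English description precedes it below -/
import Mathlib

section
/- Let G be a finite group with |G| ≥ 3. Then the set of elasticities {ρ(L(A)) : A ∈ B(G)} equals {q ∈ ℚ : 1 ≤ q ≤ D(G)/2}. -/
namespace ProductOne

open scoped Classical

variable {G : Type*} [Group G]

/-- `S` is a product-one sequence over `G`: its terms can be ordered with product `1`. -/
def IsProductOne (S : Multiset G) : Prop :=
  ∃ l : List G, (l : Multiset G) = S ∧ l.prod = 1

/-- `S` is an atom (a minimal product-one sequence): it is a nontrivial product-one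
sequence that is not the concatenation of two nontrivial product-one sequences. -/
def IsAtomSeq (S : Multiset G) : Prop :=
  S ≠ 0 ∧ IsProductOne S ∧
    ∀ A B : Multiset G, S = A + B → IsProductOne A → IsProductOne B → A = 0 ∨ B = 0

/-- `S` is a sequence over the subset `G₀ ⊆ G`. -/
def SeqOn (G₀ : Set G) (S : Multiset G) : Prop := ∀ g ∈ S, g ∈ G₀

/-- `S` is an atom of the monoid `B(G₀)` of product-one sequences over `G₀`. -/
def IsAtomSeqOn (G₀ : Set G) (S : Multiset G) : Prop := SeqOn G₀ S ∧ IsAtomSeq S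

/-- The set of lengths `L(A)` of factorizations of `A` into atoms over `G₀`. -/
def lengthsOn (G₀ : Set G) (A : Multiset G) : Set ℕ :=
  {k | ∃ f : Multiset (Multiset G), Multiset.card f = k ∧
        (∀ U ∈ f, IsAtomSeqOn G₀ U) ∧ f.sum = A}

/-- The set of lengths `L(A)` over the whole group. -/
def lengths (A : Multiset G) : Set ℕ := lengthsOn Set.univ A

/-- The set of distances of a set `L ⊆ ℕ`. -/
def distancesOf (L : Set ℕ) : Set ℕ :=
  {d | 0 < d ∧ ∃ a, a ∈ L ∧ a + d ∈ L ∧ ∀ b ∈ L, ¬(a < b ∧ b < a + d)}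

/-- The set of distances `Δ(G₀)` of the monoid `B(G₀)`. -/
def DeltaOn (G₀ : Set G) : Set ℕ :=
  {d | ∃ A : Multiset G, SeqOn G₀ A ∧ IsProductOne A ∧ d ∈ distancesOf (lengthsOn G₀ A)}

/-- The set of distances `Δ(G)` of `B(G)`. -/
def Delta (G : Type*) [Group G] : Set ℕ := DeltaOn (Set.univ : Set G)

/-- The large Davenport constant of `G₀`: maximal length of an atom of `B(G₀)`. -/
noncomputable def DavenportOn (G₀ : Set G) : ℕ :=
  sSup {k | ∃ S : Multiset G, IsAtomSeqOn G₀ S ∧ Multiset.card S = k}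

/-- The large Davenport constant `D(G)`. -/
noncomputable def Davenport (G : Type*) [Group G] : ℕ :=
  DavenportOn (Set.univ : Set G)

/-- The small Davenport constant `d(G₀)`: maximal length of a product-one free
sequence over `G₀`. -/
noncomputable def smallDavenportOn (G₀ : Set G) : ℕ :=
  sSup {k | ∃ S : Multiset G, SeqOn G₀ S ∧ Multiset.card S = k ∧
        ∀ T : Multiset G, T ≤ S → T ≠ 0 → ¬IsProductOne T}

/-- `Δ*(G) = {min Δ(G₀) : G₀ ⊆ G with Δ(G₀) ≠ ∅}`. -/
def DeltaStar (G : Type*) [Group G] : Set ℕ :=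
  {d | ∃ G₀ : Set G, (DeltaOn G₀).Nonempty ∧ d = sInf (DeltaOn G₀)}

/-- The elasticity `ρ(L) = max L / min L` of a set of lengths (with the set of
positive elements used, and `ρ = 1` if there are none). -/
noncomputable def elasticity (L : Set ℕ) : ℚ :=
  if (L ∩ {k | 0 < k}).Nonempty then
    ((sSup (L ∩ {k | 0 < k}) : ℕ) : ℚ) / ((sInf (L ∩ {k | 0 < k}) : ℕ) : ℚ)
  else 1

/-- The elasticity `ρ(G₀)` of the monoid `B(G₀)`. -/
noncomputable def rhoOn (G₀ : Set G) : ℝ :=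
  sSup {x : ℝ | ∃ A : Multiset G, SeqOn G₀ A ∧ IsProductOne A ∧
    x = (elasticity (lengthsOn G₀ A) : ℝ)}

/-- `Δ*_ρ(G) = {min Δ(G₀) : G₀ ⊆ G with ρ(G₀) = D(G)/2}`. -/
noncomputable def DeltaRhoStar (G : Type*) [Group G] : Set ℕ :=
  {d | ∃ G₀ : Set G, rhoOn G₀ = (Davenport G : ℝ) / 2 ∧ d = sInf (DeltaOn G₀)}

/-- Divisibility in the monoid `B(G)`. -/
def BDvd (A S : Multiset G) : Prop :=
  ∃ C : Multiset G, IsProductOne C ∧ S = A + C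

/-- The `ω`-invariant `ω(B(G), A)`. -/
noncomputable def omegaAt (A : Multiset G) : ℕ∞ :=
  sInf {N : ℕ∞ | ∀ f : Multiset (Multiset G),
    (∀ B ∈ f, IsProductOne B) → BDvd A f.sum →
    ∃ t ≤ f, (Multiset.card t : ℕ∞) ≤ N ∧ BDvd A t.sum}

/-- `ω(G) = sup {ω(B(G), U) : U an atom of B(G)}`. -/
noncomputable def omegaInv (G : Type*) [Group G] : ℕ∞ :=
  ⨆ U ∈ {U : Multiset G | IsAtomSeq U}, omegaAt U

/-- `z` is a factorization of `A` into atoms. -/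
def IsFactorization (A : Multiset G) (z : Multiset (Multiset G)) : Prop :=
  (∀ U ∈ z, IsAtomSeq U) ∧ z.sum = A

/-- The distance between two factorizations. -/
noncomputable def factDist (z z' : Multiset (Multiset G)) : ℕ :=
  letI := Classical.decEq (Multiset G)
  max (Multiset.card (z - z')) (Multiset.card (z' - z))

/-- The catenary degree `c(A)`. -/
noncomputable def catenaryAt (A : Multiset G) : ℕ∞ :=
  sInf {N : ℕ∞ | ∀ z z' : Multiset (Multiset G),
    IsFactorization A z → IsFactorization A z' →
    Relation.ReflTransGen
      (fun x y => IsFactorization A y ∧ (factDist x y : ℕ∞) ≤ N) z z'}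

/-- The set of positive catenary degrees `Ca(G)`. -/
noncomputable def CatenarySet (G : Type*) [Group G] : Set ℕ∞ :=
  {c | ∃ A : Multiset G, IsProductOne A ∧ catenaryAt A = c ∧ 0 < c}

/-- The catenary degree `c(G)` of `B(G)`. -/
noncomputable def catenaryDegree (G : Type*) [Group G] : ℕ∞ :=
  ⨆ A ∈ {A : Multiset G | IsProductOne A}, catenaryAt A

/-- The cross number `k(S)` of a sequence. -/
noncomputable def crossNumber (S : Multiset G) : ℚ :=
  (S.map fun g => (1 : ℚ) / (orderOf g : ℚ)).sum

/-- The system of sets of lengths `L(G)`. -/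
def LSystem (G : Type*) [Group G] : Set (Set ℕ) :=
  {L | ∃ A : Multiset G, IsProductOne A ∧ L = lengths A}

/-- The set of products `π(S)` of all orderings of the terms of `S`. -/
def piSet (S : Multiset G) : Set G :=
  {g | ∃ l : List G, (l : Multiset G) = S ∧ l.prod = g}

/-- The sumset `{x₁, -x₁} + ⋯ + {x_s, -x_s}` for a sequence `a = x₁ ⋯ x_s`. -/
def signedSums {α : Type*} [AddCommGroup α] (a : Multiset α) : Set α :=
  {z | ∃ t ≤ a, z = t.sum + t.sum - a.sum}

/-- `Σ_k(T)`: the set of sums of `k`-term subsequences of `T`. -/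
def subseqSums {α : Type*} [AddCommMonoid α] (k : ℕ) (T : Multiset α) : Set α :=
  {z | ∃ t ≤ T, Multiset.card t = k ∧ t.sum = z}

/-- The subsequence `S_X` of all terms of `S` lying in `X`. -/
noncomputable def restrictTo (X : Set G) (S : Multiset G) : Multiset G :=
  letI := Classical.decPred fun g => g ∈ X
  S.filter fun g => g ∈ X

/-- The maximum multiplicity `h(S)` of a term of `S`. -/
noncomputable def maxMultiplicity {α : Type*} (S : Multiset α) : ℕ :=
  letI := Classical.decEq α
  S.toFinset.sup S.count

end ProductOne


/-!
Every atom is either `{1}` or has length between `2` and `D(G)`. Summing over the atoms of a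
factorization of `A` with `k` atoms and `v = v₁(A)` copies of `1` gives
`2k ≤ |A| + v` and `D v + |A| ≤ D k + v`, hence `2 max L(A) ≤ D min L(A)`.
Conversely, for an atom `U` of length `D` the sequence `A = (U U⁻¹)^i 1^m` factors both as
`U^i (U⁻¹)^i 1^m` and as a product of `D i` atoms `g g⁻¹` and `m` atoms `1`, and these are
extremal by the same bounds, so `ρ(L(A)) = (m + D i) / (m + 2 i)`. Writing `q = a / b`,
the choice `i = a - b`, `m = D b - 2 a` gives `ρ(L(A)) = (D - 2) a / ((D - 2) b) = q`; here
`D ≥ 3` because `|G| ≥ 3` provides an atom `g h (g h)⁻¹`.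
-/

namespace ProductOne

open Multiset

theorem one_le_elasticity {L : Set ℕ} (hL : BddAbove L) : 1 ≤ elasticity L := by
  unfold elasticity
  split_ifs with h
  · rw [one_le_div (by exact_mod_cast (Nat.sInf_mem h).2)]
    exact_mod_cast
      csInf_le (OrderBot.bddBelow _) (Nat.sSup_mem h (hL.mono Set.inter_subset_left))
  · exact le_rfl

theorem elasticity_le {L : Set ℕ} {r : ℚ} (hr : 1 ≤ r) (hL : BddAbove L)
    (h : ∀ k ∈ L, ∀ l ∈ L, (k : ℚ) ≤ r * l) : elasticity L ≤ r := by
  unfold elasticity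
  split_ifs with hne
  · rw [div_le_iff₀ (by exact_mod_cast (Nat.sInf_mem hne).2)]
    exact h _ (Nat.sSup_mem hne (hL.mono Set.inter_subset_left)).1 _ (Nat.sInf_mem hne).1
  · exact hr

theorem elasticity_eq_div {L : Set ℕ} {m M : ℕ} (hm : IsLeast L m) (hM : IsGreatest L M)
    (hm0 : 0 < m) : elasticity L = M / m := by
  have hL : L ∩ {k | 0 < k} = L := Set.inter_eq_left.mpr fun k hk => hm0.trans_le (hm.2 hk)
  rw [elasticity, hL, if_pos ⟨m, hm.1⟩, hm.csInf_eq, hM.csSup_eq]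

theorem card_sum_eq_sum_map_card {α : Type*} (f : Multiset (Multiset α)) :
    card f.sum = (f.map card).sum :=
  card_join f

theorem count_sum_eq_sum_map_count {α : Type*} [DecidableEq α] (f : Multiset (Multiset α))
    (a : α) :
    count a f.sum = (f.map (count a)).sum := by
  simpa using count_sum (m := f) (f := id) (a := a)

variable {G : Type*} [Group G]

theorem isProductOne_zero : IsProductOne (0 : Multiset G) := ⟨[], rfl, rfl⟩

theorem IsProductOne.add {A B : Multiset G} (hA : IsProductOne A) (hB : IsProductOne B) :
    IsProductOne (A + B) := by
  obtain ⟨l, rfl, hl⟩ := hA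
  obtain ⟨m, rfl, hm⟩ := hB
  exact ⟨l ++ m, rfl, by rw [List.prod_append, hl, hm, one_mul]⟩

theorem IsProductOne.nsmul {A : Multiset G} (hA : IsProductOne A) (n : ℕ) :
    IsProductOne (n • A) := by
  induction n with
  | zero => rw [zero_nsmul]; exact isProductOne_zero
  | succ n ih => rw [succ_nsmul]; exact ih.add hA

theorem IsProductOne.map_inv {S : Multiset G} (hS : IsProductOne S) :
    IsProductOne (S.map (·⁻¹)) := by
  obtain ⟨l, rfl, hl⟩ := hS
  exact ⟨(l.map (·⁻¹)).reverse, by simp, by rw [← List.prod_inv_reverse, hl, inv_one]⟩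

theorem isProductOne_singleton {g : G} : IsProductOne ({g} : Multiset G) ↔ g = 1 := by
  constructor
  · rintro ⟨l, hl, hp⟩
    obtain rfl := coe_eq_singleton.mp hl
    simpa using hp
  · rintro rfl
    exact ⟨[1], rfl, List.prod_singleton⟩

theorem isProductOne_replicate_one (m : ℕ) : IsProductOne (replicate m (1 : G)) := by
  rw [← nsmul_singleton]
  exact (isProductOne_singleton.mpr rfl).nsmul m

theorem IsProductOne.two_le_card {T : Multiset G} (hT : IsProductOne T) (h0 : T ≠ 0)
    (h1 : (1 : G) ∉ T) : 2 ≤ card T := by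
  by_contra! hlt
  have hT1 : card T = 1 := by have := card_pos.mpr h0; omega
  obtain ⟨g, rfl⟩ := card_eq_one.mp hT1
  exact h1 (by simp [isProductOne_singleton.mp hT])

theorem isAtomSeqOn_univ {S : Multiset G} : IsAtomSeqOn Set.univ S ↔ IsAtomSeq S :=
  and_iff_right fun g _ => Set.mem_univ g

theorem mem_lengths {A : Multiset G} {k : ℕ} :
    k ∈ lengths A ↔
      ∃ f : Multiset (Multiset G), card f = k ∧ (∀ U ∈ f, IsAtomSeq U) ∧ f.sum = A := by
  simp only [lengths, lengthsOn, Set.mem_ofPred_eq, isAtomSeqOn_univ]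

theorem isAtomSeq_singleton_one : IsAtomSeq ({1} : Multiset G) := by
  refine ⟨singleton_ne_zero 1, isProductOne_singleton.mpr rfl, fun A B hAB _ _ => ?_⟩
  have hcard := congrArg card hAB
  rw [card_singleton, card_add] at hcard
  rcases Nat.eq_zero_or_pos (card A) with h | h
  · exact Or.inl (card_eq_zero.mp h)
  · exact Or.inr (card_eq_zero.mp (by omega))

/-- Any splitting of such a sequence has a part of length one, and a product-one singleton
is `{1}`. -/
theorem isAtomSeq_of_card_le_three {S : Multiset G} (hS : IsProductOne S) (h0 : S ≠ 0)
    (h1 : (1 : G) ∉ S) (h3 : card S ≤ 3) : IsAtomSeq S := by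
  refine ⟨h0, hS, fun A B hAB hA hB => ?_⟩
  by_contra! hAB0
  have hA2 := hA.two_le_card hAB0.1 fun h => h1 (hAB ▸ mem_add.mpr (Or.inl h))
  have hB2 := hB.two_le_card hAB0.2 fun h => h1 (hAB ▸ mem_add.mpr (Or.inr h))
  have hcard := congrArg card hAB
  rw [card_add] at hcard
  omega

theorem isAtomSeq_pair_inv {g : G} (hg : g ≠ 1) : IsAtomSeq ({g, g⁻¹} : Multiset G) :=
  isAtomSeq_of_card_le_three ⟨[g, g⁻¹], rfl, by simp⟩ (by simp)
    (by simp [eq_comm (a := (1 : G)), hg]) (by simp)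

theorem sum_map_pair_inv (U : Multiset G) :
    (U.map fun g => ({g, g⁻¹} : Multiset G)).sum = U + U.map (·⁻¹) := by
  have hpair : ∀ g : G, ({g, g⁻¹} : Multiset G) = {g} + {g⁻¹} := fun g => by
    rw [insert_eq_cons, singleton_add]
  simp only [hpair, sum_map_add, sum_map_singleton]
  simpa [map_map, Function.comp_def] using sum_map_singleton (U.map (·⁻¹))

theorem IsAtomSeq.eq_singleton_one_of_one_mem {S : Multiset G} (hS : IsAtomSeq S)
    (h1 : (1 : G) ∈ S) : S = {1} := by
  obtain ⟨-, ⟨l, rfl, hl⟩, hmin⟩ := hS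
  obtain ⟨s, t, rfl⟩ := List.append_of_mem (mem_coe.mp h1)
  have hsplit : ((s ++ 1 :: t : List G) : Multiset G) = {1} + ↑(s ++ t) := by
    rw [singleton_add, cons_coe, coe_eq_coe]
    exact List.perm_middle
  have hst : IsProductOne (↑(s ++ t) : Multiset G) := ⟨s ++ t, rfl, by simpa using hl⟩
  rcases hmin _ _ hsplit (isProductOne_singleton.mpr rfl) hst with h | h
  · exact absurd h (singleton_ne_zero 1)
  · rw [hsplit, h, add_zero]

theorem IsAtomSeq.one_notMem {S : Multiset G} (hS : IsAtomSeq S) (h2 : 2 ≤ card S) :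
    (1 : G) ∉ S := fun h1 => by
  rw [hS.eq_singleton_one_of_one_mem h1, card_singleton] at h2
  omega

theorem IsAtomSeq.two_le_card_add_count_one [DecidableEq G] {U : Multiset G}
    (hU : IsAtomSeq U) :
    2 ≤ card U + count 1 U := by
  by_cases h1 : (1 : G) ∈ U
  · rw [hU.eq_singleton_one_of_one_mem h1]
    simp
  · have := hU.2.1.two_le_card hU.1 h1
    omega

theorem IsAtomSeq.map_inv {S : Multiset G} (hS : IsAtomSeq S) : IsAtomSeq (S.map (·⁻¹)) := by
  obtain ⟨h0, h1, hmin⟩ := hS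
  refine ⟨by simpa using h0, h1.map_inv, fun A B hAB hA hB => ?_⟩
  have hS : S = A.map (·⁻¹) + B.map (·⁻¹) := by
    simpa [map_map, Function.comp_def] using congrArg (map (·⁻¹)) hAB
  simpa using hmin _ _ hS hA.map_inv hB.map_inv

theorem exists_isAtomSeq_card_eq_three [Finite G] (hG : 3 ≤ Nat.card G) :
    ∃ S : Multiset G, IsAtomSeq S ∧ card S = 3 := by
  classical
  have := Fintype.ofFinite G
  rw [Nat.card_eq_fintype_card] at hG
  obtain ⟨a, -, ha⟩ := Finset.exists_mem_notMem_of_card_lt_card (s := ({1} : Finset G))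
    (t := Finset.univ) (by rw [Finset.card_singleton, Finset.card_univ]; omega)
  obtain ⟨b, -, hb⟩ := Finset.exists_mem_notMem_of_card_lt_card (s := ({1, a⁻¹} : Finset G))
    (t := Finset.univ) (Finset.card_le_two.trans_lt (by rw [Finset.card_univ]; omega))
  simp only [Finset.mem_insert, Finset.mem_singleton, not_or] at ha hb
  refine ⟨{a, b, (a * b)⁻¹}, isAtomSeq_of_card_le_three ⟨[a, b, (a * b)⁻¹], rfl, by simp⟩
    (by simp) ?_ (by simp), by simp⟩
  simp [eq_comm (a := (1 : G)), ha, hb.1, mul_eq_one_iff_eq_inv', Ne.symm hb.2]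

/-- Two equal prefix products of a product-one list cut out a product-one segment whose
complement is product-one as well. -/
theorem not_isAtomSeq_of_prod_take_eq {l : List G} (hl : l.prod = 1) {i j : ℕ} (hij : i < j)
    (hj : j < l.length) (h : (l.take i).prod = (l.take j).prod) :
    ¬IsAtomSeq (l : Multiset G) := by
  set s := (l.take j).drop i
  set r := l.take i ++ l.drop j
  have hjs : l.take j = l.take i ++ s := by
    rw [← List.take_append_drop i (l.take j), List.take_take, min_eq_left hij.le]
  have hs : s.prod = 1 := by
    rw [hjs, List.prod_append] at h
    exact left_eq_mul.mp h
  have hr : r.prod = 1 := by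
    rw [List.prod_append, h, ← List.prod_append, List.take_append_drop, hl]
  have hsplit : (l : Multiset G) = s + r := by
    conv_lhs => rw [← List.take_append_drop j l, hjs]
    simp only [r, ← coe_add]
    abel
  rintro ⟨-, -, hmin⟩
  rcases hmin s r hsplit ⟨s, rfl, hs⟩ ⟨r, rfl, hr⟩ with h0 | h0 <;>
    rw [coe_eq_zero, ← List.length_eq_zero_iff] at h0 <;>
    simp only [s, r, List.length_append, List.length_take, List.length_drop] at h0 <;>
    omega

theorem IsAtomSeq.card_le_natCard [Finite G] {S : Multiset G} (hS : IsAtomSeq S) :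
    card S ≤ Nat.card G := by
  obtain ⟨l, rfl, hl⟩ := hS.2.1
  have hinj : Function.Injective fun i : Fin l.length => (l.take i).prod := by
    intro u v huv
    by_contra hne
    rcases lt_or_gt_of_ne (Fin.val_ne_of_ne hne) with h | h
    · exact not_isAtomSeq_of_prod_take_eq hl h v.isLt huv hS
    · exact not_isAtomSeq_of_prod_take_eq hl h u.isLt huv.symm hS
  simpa using Nat.card_le_card_of_injective _ hinj

section Lengths

variable [DecidableEq G]

theorem two_mul_le_of_mem_lengths {A : Multiset G} {k : ℕ} (hk : k ∈ lengths A) :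
    2 * k ≤ card A + count 1 A := by
  obtain ⟨f, rfl, hf, rfl⟩ := mem_lengths.mp hk
  calc 2 * card f = (f.map fun _ => 2).sum := by simp [mul_comm]
    _ ≤ (f.map fun U => card U + count 1 U).sum :=
      sum_map_le_sum_map _ _ fun U hU => (hf U hU).two_le_card_add_count_one
    _ = card f.sum + count 1 f.sum := by
      rw [sum_map_add, card_sum_eq_sum_map_card, count_sum_eq_sum_map_count]

theorem lengths_bddAbove (A : Multiset G) : BddAbove (lengths A) := by
  refine ⟨card A, fun k hk => ?_⟩
  have := two_mul_le_of_mem_lengths hk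
  have := count_le_card 1 A
  omega

end Lengths

section Davenport

variable [Finite G]

theorem isGreatest_davenport :
    IsGreatest {k | ∃ S : Multiset G, IsAtomSeq S ∧ card S = k} (Davenport G) := by
  have hne : {k | ∃ S : Multiset G, IsAtomSeq S ∧ card S = k}.Nonempty :=
    ⟨1, {1}, isAtomSeq_singleton_one, card_singleton 1⟩
  have hbdd : BddAbove {k | ∃ S : Multiset G, IsAtomSeq S ∧ card S = k} := by
    refine ⟨Nat.card G, ?_⟩
    rintro _ ⟨S, hS, rfl⟩
    exact hS.card_le_natCard
  simp only [Davenport, DavenportOn, isAtomSeqOn_univ]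
  exact ⟨Nat.sSup_mem hne hbdd, fun k hk => le_csSup hbdd hk⟩

theorem IsAtomSeq.card_le_davenport {S : Multiset G} (hS : IsAtomSeq S) :
    card S ≤ Davenport G :=
  isGreatest_davenport.2 ⟨S, hS, rfl⟩

theorem three_le_davenport (hG : 3 ≤ Nat.card G) : 3 ≤ Davenport G := by
  obtain ⟨S, hS, h3⟩ := exists_isAtomSeq_card_eq_three hG
  exact h3 ▸ hS.card_le_davenport

variable [DecidableEq G]

theorem IsAtomSeq.davenport_mul_count_one_add_card_le {U : Multiset G} (hU : IsAtomSeq U) :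
    Davenport G * count 1 U + card U ≤ Davenport G + count 1 U := by
  by_cases h1 : (1 : G) ∈ U
  · rw [hU.eq_singleton_one_of_one_mem h1]
    simp
  · rw [count_eq_zero.mpr h1]
    simpa using hU.card_le_davenport

theorem davenport_mul_count_one_add_card_le_of_mem_lengths {A : Multiset G} {k : ℕ}
    (hk : k ∈ lengths A) :
    Davenport G * count 1 A + card A ≤ Davenport G * k + count 1 A := by
  obtain ⟨f, rfl, hf, rfl⟩ := mem_lengths.mp hk
  calc Davenport G * count 1 f.sum + card f.sum
    _ = (f.map fun U => Davenport G * count 1 U + card U).sum := by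
      rw [sum_map_add, sum_map_mul_left, card_sum_eq_sum_map_card, count_sum_eq_sum_map_count]
    _ ≤ (f.map fun U => Davenport G + count 1 U).sum :=
      sum_map_le_sum_map _ _ fun U hU => (hf U hU).davenport_mul_count_one_add_card_le
    _ = Davenport G * card f + count 1 f.sum := by
      simp [sum_map_add, count_sum_eq_sum_map_count, mul_comm]

theorem two_mul_le_davenport_mul_of_mem_lengths (hD : 2 ≤ Davenport G) {A : Multiset G}
    {k l : ℕ} (hk : k ∈ lengths A) (hl : l ∈ lengths A) : 2 * k ≤ Davenport G * l := by
  have h1 := two_mul_le_of_mem_lengths hk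
  have h2 := davenport_mul_count_one_add_card_le_of_mem_lengths hl
  have h3 : 2 * count 1 A ≤ Davenport G * count 1 A := Nat.mul_le_mul_right _ hD
  omega

theorem elasticity_lengths_le (hD : 2 ≤ Davenport G) (A : Multiset G) :
    elasticity (lengths A) ≤ (Davenport G : ℚ) / 2 := by
  refine elasticity_le (by rw [le_div_iff₀ two_pos]; exact_mod_cast hD) (lengths_bddAbove A)
    fun k hk l hl => ?_
  rw [div_mul_eq_mul_div, le_div_iff₀ two_pos, mul_comm]
  exact_mod_cast two_mul_le_davenport_mul_of_mem_lengths hD hk hl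

theorem elasticity_lengths_nsmul_add_replicate {U : Multiset G} (hU : IsAtomSeq U)
    (hUD : card U = Davenport G) (hU1 : (1 : G) ∉ U) (i m : ℕ) (hpos : 0 < m + 2 * i) :
    elasticity (lengths (i • (U + U.map (·⁻¹)) + replicate m 1)) =
      ((m + Davenport G * i : ℕ) : ℚ) / (m + 2 * i : ℕ) := by
  set A := i • (U + U.map (·⁻¹)) + replicate m 1
  have hV1 : (1 : G) ∉ U.map (·⁻¹) := by simpa using hU1
  have hcount : count 1 A = m := by simp [A, count_eq_zero.mpr hU1, count_eq_zero.mpr hV1]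
  have hcard : card A = 2 * Davenport G * i + m := by rw [card_add, card_nsmul, card_add, card_map, hUD, card_replicate]; ring
  have hone : ∀ W ∈ replicate m ({1} : Multiset G), IsAtomSeq W := fun W hW =>
    eq_of_mem_replicate hW ▸ isAtomSeq_singleton_one
  have hmin : m + 2 * i ∈ lengths A := by
    refine mem_lengths.mpr ⟨i • {U, U.map (·⁻¹)} + replicate m {1}, by rw [card_add, card_nsmul, card_pair, card_replicate]; ring, ?_, ?_⟩
    · simp only [mem_add, mem_nsmul, insert_eq_cons, mem_cons, mem_singleton]
      rintro W (⟨-, rfl | rfl⟩ | hW)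
      exacts [hU, hU.map_inv, hone W hW]
    · simp [A, sum_nsmul, nsmul_singleton]
  have hmax : m + Davenport G * i ∈ lengths A := by
    refine mem_lengths.mpr ⟨i • U.map (fun g => {g, g⁻¹}) + replicate m {1}, ?_, ?_, ?_⟩
    · rw [card_add, card_nsmul, card_map, hUD, card_replicate]; ring
    · simp only [mem_add, mem_nsmul, mem_map]
      rintro W (⟨-, g, hg, rfl⟩ | hW)
      exacts [isAtomSeq_pair_inv fun h => hU1 (h ▸ hg), hone W hW]
    · rw [sum_add, sum_nsmul, sum_map_pair_inv, sum_replicate, nsmul_singleton]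
  refine elasticity_eq_div ⟨hmin, fun k hk => ?_⟩ ⟨hmax, fun k hk => ?_⟩ hpos
  · have hD : 0 < Davenport G := hUD ▸ card_pos.mpr hU.1
    have := davenport_mul_count_one_add_card_le_of_mem_lengths hk
    rw [hcount, hcard] at this
    exact Nat.le_of_mul_le_mul_left (by linarith) hD
  · have := two_mul_le_of_mem_lengths hk
    rw [hcount, hcard] at this
    linarith

theorem exists_eq_elasticity_lengths (hD : 3 ≤ Davenport G) {q : ℚ} (h1 : 1 ≤ q)
    (h2 : q ≤ (Davenport G : ℚ) / 2) :
    ∃ A : Multiset G, IsProductOne A ∧ q = elasticity (lengths A) := by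
  obtain ⟨a, b, hb, rfl⟩ : ∃ a b : ℕ, 0 < b ∧ q = a / b := by
    refine ⟨q.num.toNat, q.den, q.den_pos, ?_⟩
    have hnum : ((q.num.toNat : ℤ) : ℚ) = q.num :=
      congrArg _ (Int.toNat_of_nonneg (Rat.num_nonneg.mpr (zero_le_one.trans h1)))
    rw [Int.cast_natCast] at hnum
    rw [hnum, Rat.num_div_den]
  have hbQ : (0 : ℚ) < b := by exact_mod_cast hb
  have hba : b ≤ a := by exact_mod_cast (one_le_div hbQ).mp h1
  have hab : 2 * a ≤ Davenport G * b := by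
    rw [div_le_div_iff₀ hbQ two_pos] at h2
    exact_mod_cast (by push_cast; linarith : ((2 * a : ℕ) : ℚ) ≤ (Davenport G * b : ℕ))
  obtain ⟨U, hU, hUD⟩ := (isGreatest_davenport (G := G)).1
  have hD2 : 2 ≤ Davenport G := by omega
  have hnum : Davenport G * b - 2 * a + Davenport G * (a - b) = (Davenport G - 2) * a := by
    zify [hba, hab, hD2]
    ring
  have hden : Davenport G * b - 2 * a + 2 * (a - b) = (Davenport G - 2) * b := by
    zify [hba, hab, hD2]
    ring
  refine ⟨(a - b) • (U + U.map (·⁻¹)) + replicate (Davenport G * b - 2 * a) 1,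
    ((hU.2.1.add hU.map_inv.2.1).nsmul _).add (isProductOne_replicate_one _), ?_⟩
  rw [elasticity_lengths_nsmul_add_replicate hU hUD (hU.one_notMem (by omega)) _ _
    (hden ▸ Nat.mul_pos (by omega) hb), hnum, hden, Nat.cast_mul, Nat.cast_mul,
    mul_div_mul_left _ _ (Nat.cast_ne_zero.mpr (by omega))]

end Davenport

end ProductOne

open ProductOne in
/-- Let `G` be a finite group with `|G| ≥ 3`. Then the set of
elasticities `{ρ(L(A)) : A ∈ B(G)}` equals `{q ∈ ℚ : 1 ≤ q ≤ D(G)/2}`. -/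
theorem set_of_elasticities (G : Type*) [Group G] [Finite G] (hG : 3 ≤ Nat.card G) :
    {q : ℚ | ∃ A : Multiset G, IsProductOne A ∧ q = elasticity (lengths A)} =
      {q : ℚ | 1 ≤ q ∧ q ≤ (Davenport G : ℚ) / 2} := by
  classical
  have hD := three_le_davenport hG
  ext q
  constructor
  · rintro ⟨A, -, rfl⟩
    exact ⟨one_le_elasticity (lengths_bddAbove A), elasticity_lengths_le (by omega) A⟩
  · rintro ⟨h1, h2⟩
    exact exists_eq_elasticity_lengths hD h1 h2
end

section
/- Let G be a finite group and G_0 ≤ G a subgroup with D(G_0) = D(G). If D(G_0) = 1 + d(G_0), then G_0 = G. -/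
/-!
If `g ∉ G₀` and `S` is a product-one free sequence over `G₀` of maximal length `d(G₀)`, then
`g S` is still product-one free, since a product-one subsequence containing `g` would express `g`
as a product of elements of `G₀`. Closing `g S` up with the inverse of one of its products gives
an atom of `B(G)` of length `d(G₀) + 2`, so `D(G) ≥ d(G₀) + 2 > D(G₀)`.
-/

namespace ProductOne

variable {G : Type*} [Group G]

def IsProductOneFree (S : Multiset G) : Prop :=
  ∀ T ≤ S, T ≠ 0 → ¬IsProductOne T

theorem exists_eq_append_append_prod_eq_one [Finite G] {l : List G}
    (hl : Nat.card G < l.length) :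
    ∃ a b c : List G, l = a ++ b ++ c ∧ b ≠ [] ∧ c ≠ [] ∧ b.prod = 1 := by
  have split : ∀ i j : ℕ, i < j → j < l.length → (l.take i).prod = (l.take j).prod →
      ∃ a b c : List G, l = a ++ b ++ c ∧ b ≠ [] ∧ c ≠ [] ∧ b.prod = 1 := by
    intro i j hij hj hprod
    obtain ⟨k, rfl⟩ := Nat.exists_eq_add_of_lt hij
    have htake : l.take (i + k + 1) = l.take i ++ (l.drop i).take (k + 1) := by
      rw [add_assoc, List.take_add]
    refine ⟨l.take i, (l.drop i).take (k + 1), l.drop (i + k + 1), ?_, ?_, ?_, ?_⟩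
    · rw [← htake, List.take_append_drop]
    · simp only [ne_eq, List.take_eq_nil_iff, List.drop_eq_nil_iff]
      omega
    · simp only [ne_eq, List.drop_eq_nil_iff]
      omega
    · rwa [htake, List.prod_append, left_eq_mul] at hprod
  have hnot : ¬Function.Injective fun i : Fin l.length => (l.take i).prod := fun hinj => by
    simpa using (Nat.card_le_card_of_injective _ hinj).trans_lt hl
  obtain ⟨i, j, hprod, hij⟩ : ∃ i j : Fin l.length, _ ∧ i ≠ j := by
    simpa [Function.Injective] using hnot
  rcases Fin.lt_or_lt_of_ne hij with hlt | hlt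
  · exact split i j hlt j.isLt hprod
  · exact split j i hlt i.isLt hprod.symm

theorem IsProductOneFree.card_le [Finite G] {S : Multiset G} (hS : IsProductOneFree S) :
    Multiset.card S ≤ Nat.card G := by
  by_contra! hlt
  obtain ⟨a, b, c, hsplit, hb, -, hprod⟩ :=
    exists_eq_append_append_prod_eq_one (l := S.toList) (by simpa using hlt)
  refine hS b ?_ (by simpa using hb) ⟨b, rfl, hprod⟩
  rw [← Multiset.coe_toList S, hsplit, Multiset.coe_le]
  exact (List.infix_append a b c).sublist.subperm

theorem IsAtomSeq.card_le [Finite G] {U : Multiset G} (hU : IsAtomSeq U) :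
    Multiset.card U ≤ Nat.card G := by
  by_contra! hlt
  obtain ⟨-, ⟨l, rfl, hl⟩, hatom⟩ := hU
  obtain ⟨a, b, c, rfl, hb, hc, hprod⟩ := exists_eq_append_append_prod_eq_one (l := l) hlt
  have hsplit : ((a ++ b ++ c : List G) : Multiset G) = ↑(a ++ c) + ↑b := by
    simp only [← Multiset.coe_add]
    exact add_right_comm _ _ _
  have hac : (a ++ c).prod = 1 := by
    simpa [List.prod_append, hprod] using hl
  rcases hatom _ _ hsplit ⟨a ++ c, rfl, hac⟩ ⟨b, rfl, hprod⟩ with h | h <;> simp_all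

theorem exists_isProductOneFree_card_eq_smallDavenportOn [Finite G] (G₀ : Set G) :
    ∃ S : Multiset G, SeqOn G₀ S ∧ IsProductOneFree S ∧
      Multiset.card S = smallDavenportOn G₀ := by
  obtain ⟨S, hSG₀, hcard, hS⟩ : smallDavenportOn G₀ ∈
      {k | ∃ S : Multiset G, SeqOn G₀ S ∧ Multiset.card S = k ∧ IsProductOneFree S} :=
    Nat.sSup_mem ⟨0, 0, by simp [SeqOn], rfl, fun T hT h0 => absurd (Multiset.le_zero.mp hT) h0⟩
      ⟨Nat.card G, by rintro _ ⟨S, -, rfl, hS⟩; exact hS.card_le⟩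
  exact ⟨S, hSG₀, hS, hcard⟩

theorem card_le_davenportOn [Finite G] {G₀ : Set G} {U : Multiset G} (hU : IsAtomSeqOn G₀ U) :
    Multiset.card U ≤ DavenportOn G₀ :=
  le_csSup ⟨Nat.card G, by rintro _ ⟨V, hV, rfl⟩; exact hV.2.card_le⟩ ⟨U, hU, rfl⟩

theorem mem_of_isProductOne_cons {H : Subgroup G} {g : G} {T : Multiset G}
    (hT : SeqOn (H : Set G) T) (hgT : IsProductOne (g ::ₘ T)) : g ∈ H := by
  obtain ⟨l, hl, hprod⟩ := hgT
  obtain ⟨a, c, rfl⟩ := List.append_of_mem (Multiset.mem_coe.mp (hl ▸ Multiset.mem_cons_self g T))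
  have hac : ((a ++ c : List G) : Multiset G) = T :=
    (Multiset.cons_inj_right g).mp (hl ▸ (Multiset.coe_eq_coe.mpr List.perm_middle).symm)
  have hmem : ∀ x ∈ a ++ c, x ∈ H := fun x hx => hT x (hac ▸ Multiset.mem_coe.mpr hx)
  have ha : a.prod ∈ H := list_prod_mem fun x hx => hmem x (List.mem_append_left c hx)
  have hc : c.prod ∈ H := list_prod_mem fun x hx => hmem x (List.mem_append_right a hx)
  have hg : g = a.prod⁻¹ * c.prod⁻¹ := by
    rw [List.prod_append, List.prod_cons, ← mul_assoc] at hprod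
    calc g = a.prod⁻¹ * (a.prod * g * c.prod) * c.prod⁻¹ := by group
      _ = a.prod⁻¹ * c.prod⁻¹ := by rw [hprod, mul_one]
  exact hg ▸ mul_mem (inv_mem ha) (inv_mem hc)

theorem IsProductOneFree.cons_of_notMem {H : Subgroup G} {g : G} {S : Multiset G}
    (hS : IsProductOneFree S) (hSH : SeqOn (H : Set G) S) (hg : g ∉ H) :
    IsProductOneFree (g ::ₘ S) := by
  classical
  intro T hT hT0 hTprod
  by_cases hgT : g ∈ T
  · have herase : T.erase g ≤ S := by
      simpa using Multiset.erase_le_erase g hT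
    rw [← Multiset.cons_erase hgT] at hTprod
    exact hg (mem_of_isProductOne_cons (fun x hx => hSH x (Multiset.mem_of_le herase hx)) hTprod)
  · exact hS T ((Multiset.le_cons_of_notMem hgT).mp hT) hT0 hTprod

theorem IsProductOneFree.isAtomSeq_cons_inv_prod {S : Multiset G} (hS : IsProductOneFree S) :
    IsAtomSeq (S.toList.prod⁻¹ ::ₘ S) := by
  classical
  set u := S.toList.prod⁻¹
  refine ⟨Multiset.cons_ne_zero, ⟨S.toList ++ [u], ?_, by simp [u]⟩, ?_⟩
  · rw [← Multiset.coe_add, Multiset.coe_toList, add_comm]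
    rfl
  have le_of_mem : ∀ A B : Multiset G, u ::ₘ S = A + B → u ∈ A → B ≤ S := by
    intro A B hAB huA
    rw [← Multiset.cons_erase huA, Multiset.cons_add, Multiset.cons_inj_right] at hAB
    exact hAB ▸ Multiset.le_add_left _ _
  intro A B hAB hA hB
  by_contra! hAB0
  rcases Multiset.mem_add.mp (hAB ▸ Multiset.mem_cons_self u S) with huA | huB
  · exact hS B (le_of_mem A B hAB huA) hAB0.2 hB
  · exact hS A (le_of_mem B A (hAB.trans (add_comm A B)) huB) hAB0.1 hA

end ProductOne

open ProductOne in
/-- Let `G` be a finite group and `G₀ ≤ G` a subgroup with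
`D(G₀) = D(G)`. If `D(G₀) = 1 + d(G₀)`, then `G₀ = G`. -/
theorem subgroup_eq_top_of_davenport (G : Type*) [Group G] [Finite G] (G₀ : Subgroup G)
    (hD : DavenportOn (G₀ : Set G) = Davenport G)
    (h : DavenportOn (G₀ : Set G) = 1 + smallDavenportOn (G₀ : Set G)) :
    G₀ = ⊤ := by
  rw [Subgroup.eq_top_iff']
  by_contra! ⟨g, hg⟩
  obtain ⟨S, hSG₀, hS, hcard⟩ := exists_isProductOneFree_card_eq_smallDavenportOn (G₀ : Set G)
  have hatom := (hS.cons_of_notMem hSG₀ hg).isAtomSeq_cons_inv_prod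
  have hle : Multiset.card _ ≤ Davenport G := card_le_davenportOn ⟨fun _ _ => trivial, hatom⟩
  simp only [Multiset.card_cons, hcard] at hle
  omega
end

section
/- Let G be a finite group. Then G is not abelian if and only if there exist distinct atoms U, V of B(G), a nontrivial product-one sequence W ∈ B(G), and m ∈ ℕ such that U^[m] = V^[m] · W (concatenation of m copies of V with W equals m copies of U). -/
section Aux

open ProductOne

variable {G : Type*} [Group G]

private lemma conj_comm' {x y : G} (h : x * y * x⁻¹ = y) : x * y = y * x := by
  rw [mul_inv_eq_iff_eq_mul] at h; exact h

private lemma comm_of_inv' {a b : G} (h : a * b⁻¹ = b⁻¹ * a) : a * b = b * a := by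
  have h2 : b * (a * b⁻¹) * b = b * (b⁻¹ * a) * b := by rw [h]
  calc a * b = b * (b⁻¹ * a) * b := by group
    _ = b * (a * b⁻¹) * b := h2.symm
    _ = b * a := by group

set_option linter.unusedSectionVars false in
private lemma pair_eq_pair' {p q x y : G} (h : ({p, q} : Multiset G) = {x, y}) :
    (p = x ∧ q = y) ∨ (p = y ∧ q = x) := by
  rw [show ({p, q} : Multiset G) = p ::ₘ {q} from rfl,
    show ({x, y} : Multiset G) = x ::ₘ {y} from rfl, Multiset.cons_eq_cons] at h
  rcases h with ⟨h1, h2⟩ | ⟨hne, cs, h1, h2⟩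
  · exact Or.inl ⟨h1, Multiset.singleton_inj.mp h2⟩
  · rw [Multiset.singleton_eq_cons_iff] at h1 h2
    exact Or.inr ⟨h2.1.symm, h1.1⟩

private lemma prodOne_card_one {A : Multiset G} (h : IsProductOne A)
    (hc : Multiset.card A = 1) : A = {1} := by
  obtain ⟨l, hl, hp⟩ := h
  subst hl
  rcases l with _ | ⟨x, _ | ⟨y, l⟩⟩
  · simp at hc
  · simp at hp; rw [hp]; rfl
  · simp only [Multiset.coe_card, List.length_cons] at hc; omega

private lemma prodOne_card_two {A : Multiset G} (h : IsProductOne A)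
    (hc : Multiset.card A = 2) : ∃ u : G, A = {u, u⁻¹} := by
  obtain ⟨l, hl, hp⟩ := h
  subst hl
  rcases l with _ | ⟨x, _ | ⟨y, _ | ⟨z, l⟩⟩⟩
  · simp at hc
  · simp at hc
  · have hxy : x * y = 1 := by simpa using hp
    exact ⟨x, by rw [show (↑[x, y] : Multiset G) = {x, y} from rfl,
      eq_inv_of_mul_eq_one_right hxy]⟩
  · simp only [Multiset.coe_card, List.length_cons] at hc; omega

private lemma prodOne_pair {x y : G} (h : IsProductOne ({x, y} : Multiset G)) : y = x⁻¹ := by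
  obtain ⟨u, hu⟩ := prodOne_card_two h (by rfl)
  rcases pair_eq_pair' hu with ⟨h1, h2⟩ | ⟨h1, h2⟩
  · rw [h2, h1]
  · rw [h2, h1, inv_inv]

private lemma pow_smul_prodOne (l : List G) (k : ℕ) (hk : l.prod ^ k = 1) :
    IsProductOne (k • (l : Multiset G)) := by
  suffices h : ∀ k : ℕ, ∃ l' : List G, (l' : Multiset G) = k • (l : Multiset G) ∧
      l'.prod = l.prod ^ k by
    obtain ⟨l', h1, h2⟩ := h k
    exact ⟨l', h1, by rw [h2, hk]⟩
  intro k
  induction k with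
  | zero => exact ⟨[], by simp, by simp⟩
  | succ n ih =>
    obtain ⟨l', h1, h2⟩ := ih
    refine ⟨l ++ l', ?_, ?_⟩
    · rw [← Multiset.coe_add, h1, succ_nsmul']
    · rw [List.prod_append, h2, pow_succ']

private lemma atom_V {a b : G} (hab : a * b ≠ b * a) :
    IsAtomSeq ({a, a⁻¹} : Multiset G) := by
  have ha1 : a ≠ 1 := by rintro rfl; exact hab (by simp)
  refine ⟨by simp, ⟨[a, a⁻¹], rfl, by simp⟩, ?_⟩
  intro A B hAB hA hB
  by_contra hcon
  push_neg at hcon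
  obtain ⟨hA0, hB0⟩ := hcon
  have hcards : Multiset.card A + Multiset.card B = 2 := by
    have := congrArg Multiset.card hAB; simpa using this.symm
  have h1A : 0 < Multiset.card A := Multiset.card_pos.mpr hA0
  have h1B : 0 < Multiset.card B := Multiset.card_pos.mpr hB0
  have hcA : Multiset.card A = 1 := by omega
  have hA1 := prodOne_card_one hA hcA
  have hmem : (1 : G) ∈ ({a, a⁻¹} : Multiset G) := by
    rw [hAB]; exact Multiset.mem_add.mpr (Or.inl (by simp [hA1]))
  rcases (by simpa using hmem : 1 = a ∨ 1 = a⁻¹) with h | h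
  · exact ha1 h.symm
  · exact ha1 (by rw [← inv_inv a, ← h]; simp)

private lemma atom_U {a b : G} (hab : a * b ≠ b * a) :
    IsAtomSeq ({a, b, a⁻¹, a * b⁻¹ * a⁻¹} : Multiset G) := by
  classical
  set c := a * b⁻¹ * a⁻¹ with hc
  have hcinv : c⁻¹ = a * b * a⁻¹ := by rw [hc]; group
  have ha1 : a ≠ 1 := by rintro rfl; exact hab (by simp)
  have hb1 : b ≠ 1 := by rintro rfl; exact hab (by simp)
  have hba : b ≠ a := by rintro rfl; exact hab rfl
  have hbainv : b ≠ a⁻¹ := by rintro rfl; exact hab (by simp)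
  have hc1 : c ≠ 1 := by
    rw [hc]; intro h
    rw [mul_inv_eq_iff_eq_mul, one_mul] at h
    have h3 : b⁻¹ = 1 := mul_left_cancel (show a * b⁻¹ = a * 1 by rw [mul_one]; exact h)
    exact hb1 (inv_eq_one.mp h3)
  have hca : c ≠ a := by
    rw [hc]; intro h
    rw [mul_inv_eq_iff_eq_mul] at h
    have h3 : b⁻¹ = a := mul_left_cancel h
    exact hbainv (by rw [← h3, inv_inv])
  have hcainv : c ≠ a⁻¹ := by
    rw [hc]; intro h
    rw [mul_inv_eq_iff_eq_mul, inv_mul_cancel] at h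
    exact hba (inv_injective (eq_inv_of_mul_eq_one_right h))
  refine ⟨by simp, ⟨[a, b, a⁻¹, c], rfl, ?_⟩, ?_⟩
  · simp only [List.prod_cons, List.prod_nil, mul_one]
    rw [hc]; group
  intro A B hAB hA hB
  by_contra hcon
  push_neg at hcon
  obtain ⟨hA0, hB0⟩ := hcon
  have hcards : Multiset.card A + Multiset.card B = 4 := by
    have := congrArg Multiset.card hAB; simpa using this.symm
  have h1A : 0 < Multiset.card A := Multiset.card_pos.mpr hA0
  have h1B : 0 < Multiset.card B := Multiset.card_pos.mpr hB0
  have none_one : (1 : G) ∉ ({a, b, a⁻¹, c} : Multiset G) := by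
    intro hmem
    rcases (by simpa using hmem : (1 : G) = a ∨ (1 : G) = b ∨ (1 : G) = a⁻¹ ∨ (1 : G) = c)
      with h | h | h | h
    · exact ha1 h.symm
    · exact hb1 h.symm
    · exact ha1 (by rw [← inv_inv a, ← h]; simp)
    · exact hc1 h.symm
  rcases (by omega : Multiset.card A = 1 ∨ Multiset.card A = 2 ∨ Multiset.card A = 3)
    with hcA | hcA | hcA
  · have hA1 := prodOne_card_one hA hcA
    exact none_one (by rw [hAB]; exact Multiset.mem_add.mpr (Or.inl (by simp [hA1])))
  · -- card A = 2
    obtain ⟨u, hAu⟩ := prodOne_card_two hA hcA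
    have hAle : A ≤ ({a, b, a⁻¹, c} : Multiset G) := by
      rw [hAB]; exact Multiset.le_add_right _ _
    have hu_mem : u ∈ ({a, b, a⁻¹, c} : Multiset G) :=
      Multiset.mem_of_le hAle (by simp [hAu])
    have hui_mem : u⁻¹ ∈ ({a, b, a⁻¹, c} : Multiset G) :=
      Multiset.mem_of_le hAle (by rw [hAu]; simp)
    have hgood : A = {a, a⁻¹} := by
      rcases (by simpa using hu_mem : u = a ∨ u = b ∨ u = a⁻¹ ∨ u = c) with h | h | h | h
      · rw [hAu, h]
      · exfalso
        rw [h] at hAu hui_mem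
        rcases (by simpa using hui_mem : b⁻¹ = a ∨ b⁻¹ = b ∨ b⁻¹ = a⁻¹ ∨ b⁻¹ = c)
          with h' | h' | h' | h'
        · exact hbainv (by rw [← h', inv_inv])
        · -- b⁻¹ = b : count argument
          have hbc : b ≠ c := by
            intro hbc
            apply hab
            apply conj_comm'
            calc a * b * a⁻¹ = a * b⁻¹ * a⁻¹ := by rw [h']
              _ = c := hc.symm
              _ = b := hbc.symm
          have hcntA : Multiset.count b A = 2 := by rw [hAu, h']; simp
          have hcntU : Multiset.count b ({a, b, a⁻¹, c} : Multiset G) = 1 := by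
            rw [show ({a, b, a⁻¹, c} : Multiset G) = a ::ₘ b ::ₘ a⁻¹ ::ₘ {c} from rfl,
              Multiset.count_cons_of_ne hba, Multiset.count_cons_self,
              Multiset.count_cons_of_ne hbainv, Multiset.count_singleton, if_neg hbc]
          have hle := Multiset.count_le_of_le b hAle
          omega
        · exact hba (inv_injective h')
        · exact hab (comm_of_inv' (conj_comm' (by rw [← hc]; exact h'.symm)))
      · rw [hAu, h, inv_inv]; exact Multiset.pair_comm _ _
      · exfalso
        rw [h] at hAu hui_mem
        rcases (by simpa using hui_mem : c⁻¹ = a ∨ c⁻¹ = b ∨ c⁻¹ = a⁻¹ ∨ c⁻¹ = c)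
          with h' | h' | h' | h'
        · rw [hcinv, mul_inv_eq_iff_eq_mul] at h'
          exact hab (by rw [mul_left_cancel h'])
        · rw [hcinv] at h'
          exact hab (conj_comm' h')
        · rw [hcinv, mul_inv_eq_iff_eq_mul, inv_mul_cancel] at h'
          have hb : b = a⁻¹ := eq_inv_of_mul_eq_one_right h'
          exact hab (by rw [hb]; simp)
        · -- c⁻¹ = c : count argument
          have hcb : c ≠ b := by
            intro hcb
            apply hab
            apply conj_comm'
            calc a * b * a⁻¹ = c⁻¹ := hcinv.symm
              _ = c := h'
              _ = b := hcb
          have hcntA : Multiset.count c A = 2 := by rw [hAu, h']; simp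
          have hcntU : Multiset.count c ({a, b, a⁻¹, c} : Multiset G) = 1 := by
            rw [show ({a, b, a⁻¹, c} : Multiset G) = a ::ₘ b ::ₘ a⁻¹ ::ₘ {c} from rfl,
              Multiset.count_cons_of_ne hca, Multiset.count_cons_of_ne hcb,
              Multiset.count_cons_of_ne hcainv, Multiset.count_singleton, if_pos rfl]
          have hle := Multiset.count_le_of_le c hAle
          omega
    have hsplit : ({a, b, a⁻¹, c} : Multiset G) = ({a, a⁻¹} : Multiset G) + {b, c} := by
      rw [show ({a, b, a⁻¹, c} : Multiset G) = a ::ₘ b ::ₘ a⁻¹ ::ₘ {c} from rfl,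
        Multiset.cons_swap b a⁻¹]
      simp only [Multiset.insert_eq_cons, Multiset.cons_add, Multiset.singleton_add]
    rw [hgood] at hAB
    rw [hsplit] at hAB
    have hB2 : ({b, c} : Multiset G) = B := add_left_cancel hAB
    have hbc : c = b⁻¹ := prodOne_pair (hB2 ▸ hB)
    rw [hc] at hbc
    exact hab (comm_of_inv' (conj_comm' hbc))
  · have hcB : Multiset.card B = 1 := by omega
    have hB1 := prodOne_card_one hB hcB
    exact none_one (by rw [hAB]; exact Multiset.mem_add.mpr (Or.inr (by simp [hB1])))

private lemma prod_eq_of_coe_eq (hcomm : ∀ a b : G, a * b = b * a) {l₁ l₂ : List G}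
    (h : (l₁ : Multiset G) = (l₂ : Multiset G)) : l₁.prod = l₂.prod := by
  have hpw : ∀ l : List G, l.Pairwise Commute := by
    intro l
    induction l with
    | nil => exact List.Pairwise.nil
    | cons a t ih => exact List.Pairwise.cons (fun y _ => hcomm a y) ih
  exact (Multiset.coe_eq_coe.mp h).prod_eq' (hpw l₁)

private lemma isProdOne_of_add (hcomm : ∀ a b : G, a * b = b * a) {A B : Multiset G}
    (hAB : IsProductOne (A + B)) (hA : IsProductOne A) : IsProductOne B := by
  obtain ⟨lAB, hlAB, hpAB⟩ := hAB
  obtain ⟨lA, hlA, hpA⟩ := hA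
  refine ⟨B.toList, Multiset.coe_toList B, ?_⟩
  have hcoe : ((lA ++ B.toList : List G) : Multiset G) = (lAB : Multiset G) := by
    rw [← Multiset.coe_add, hlA, Multiset.coe_toList, hlAB]
  have := prod_eq_of_coe_eq hcomm hcoe
  rw [List.prod_append, hpA, one_mul, hpAB] at this
  exact this

theorem not_abelian_iff_atom_relation_aux (G : Type*) [Group G] [Finite G] :
    (¬ ∀ a b : G, a * b = b * a) ↔
      ∃ (U V W : Multiset G) (m : ℕ), 0 < m ∧ IsAtomSeq U ∧ IsAtomSeq V ∧ U ≠ V ∧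
        IsProductOne W ∧ W ≠ 0 ∧ m • U = m • V + W := by
  constructor
  · intro hna
    push_neg at hna
    obtain ⟨a, b, hab⟩ := hna
    set c := a * b⁻¹ * a⁻¹ with hc
    set m := orderOf (b * c) with hm
    have hmpos : 0 < m := orderOf_pos _
    refine ⟨{a, b, a⁻¹, c}, {a, a⁻¹}, m • ({b, c} : Multiset G), m, hmpos,
      atom_U hab, atom_V hab, ?_, ?_, ?_, ?_⟩
    · intro h
      have := congrArg Multiset.card h
      simp at this
    · have hpow : ([b, c] : List G).prod ^ m = 1 := by
        simp only [List.prod_cons, List.prod_nil, mul_one]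
        exact pow_orderOf_eq_one _
      exact pow_smul_prodOne [b, c] m hpow
    · intro h
      have := congrArg Multiset.card h
      rw [Multiset.card_nsmul] at this
      simp at this
      omega
    · have hsplit : ({a, b, a⁻¹, c} : Multiset G) = ({a, a⁻¹} : Multiset G) + {b, c} := by
        rw [show ({a, b, a⁻¹, c} : Multiset G) = a ::ₘ b ::ₘ a⁻¹ ::ₘ {c} from rfl,
          Multiset.cons_swap b a⁻¹]
        simp only [Multiset.insert_eq_cons, Multiset.cons_add, Multiset.singleton_add]
      rw [hsplit, smul_add]
  · rintro ⟨U, V, W, m, hm, hU, hV, hUV, hW, hWne, heq⟩ hcomm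
    classical
    have hVU : V ≤ U := by
      rw [Multiset.le_iff_count]
      intro g
      have hle : m • V ≤ m • U := by rw [heq]; exact Multiset.le_add_right _ _
      have hcnt := Multiset.count_le_of_le g hle
      rw [Multiset.count_nsmul, Multiset.count_nsmul] at hcnt
      exact le_of_mul_le_mul_left hcnt hm
    obtain ⟨C, hC⟩ := Multiset.le_iff_exists_add.mp hVU
    have hCp : IsProductOne C := isProdOne_of_add hcomm (hC ▸ hU.2.1) hV.2.1
    rcases hU.2.2 V C hC hV.2.1 hCp with h0 | h0
    · exact hV.1 h0
    · exact hUV (by rw [hC, h0, add_zero])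

end Aux

open ProductOne in
/-- A finite group `G` is not abelian iff there exist distinct atoms
`U, V` of `B(G)`, a nontrivial product-one sequence `W`, and `m ∈ ℕ` with
`U^[m] = V^[m] ⋅ W`. -/
theorem not_abelian_iff_atom_relation (G : Type*) [Group G] [Finite G] :
    (¬ ∀ a b : G, a * b = b * a) ↔
      ∃ (U V W : Multiset G) (m : ℕ), 0 < m ∧ IsAtomSeq U ∧ IsAtomSeq V ∧ U ≠ V ∧
        IsProductOne W ∧ W ≠ 0 ∧ m • U = m • V + W := by
  exact not_abelian_iff_atom_relation_aux G
end

section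
/- Let n ≥ 3, let G = ⟨α, τ : α^n = τ^2 = 1, τα = α^{-1}τ⟩ be the dihedral group of order 2n, and let S be a sequence over G with S ∉ F(⟨α⟩). Write S_{⟨α⟩} = α^{x_1} ⋯ α^{x_s} with x_1, …, x_s ∈ ℤ/nℤ, and let ℓ = |S_{τ⟨α⟩}| ≥ 1. Then π(S) = τ^ℓ · ({x_1, −x_1} + ⋯ + {x_s, −x_s} + (−1)^ℓ Σ_{⌊ℓ/2⌋}(2 S^+_{τ⟨α⟩}) − (−1)^ℓ σ(S^+_{τ⟨α⟩}))^*, where for a subset Z ⊆ ℤ/nℤ, Z^* = {α^z : z ∈ Z}. -/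
theorem Multiset.le_map_iff {α β : Type*} {f : α → β} {u : Multiset β} {b : Multiset α} :
    u ≤ b.map f ↔ ∃ u' ≤ b, u'.map f = u := by
  refine ⟨fun h => ?_, fun ⟨u', hu', hu⟩ => hu ▸ Multiset.map_le_map hu'⟩
  induction u, b using Quotient.inductionOn₂ with
  | _ U L =>
    obtain ⟨V, hVU, hV⟩ := Multiset.coe_le.1 h
    obtain ⟨L', hL', rfl⟩ := List.sublist_map_iff.1 hV
    exact ⟨L', Multiset.coe_le.2 hL'.subperm, Multiset.coe_eq_coe.2 hVU⟩

namespace ProductOne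

section piSet

variable {G : Type*} [Group G]

theorem prod_mem_piSet (l : List G) : l.prod ∈ piSet (l : Multiset G) := ⟨l, rfl, rfl⟩

theorem one_mem_piSet_zero : (1 : G) ∈ piSet 0 := prod_mem_piSet []

theorem mem_piSet_singleton (g : G) : g ∈ piSet {g} := ⟨[g], rfl, List.prod_singleton⟩

theorem mul_mem_piSet_add {g h : G} {S T : Multiset G} (hg : g ∈ piSet S) (hh : h ∈ piSet T) :
    g * h ∈ piSet (S + T) := by
  obtain ⟨l, rfl, rfl⟩ := hg
  obtain ⟨m, rfl, rfl⟩ := hh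
  exact ⟨l ++ m, rfl, List.prod_append⟩

end piSet

section signedSums

variable {α : Type*}

theorem mem_signedSums_iff [AddCommGroup α] {a : Multiset α} {x : α} :
    x ∈ signedSums a ↔ ∃ t t', a = t + t' ∧ x = t.sum - t'.sum := by
  constructor
  · rintro ⟨t, ht, rfl⟩
    obtain ⟨t', rfl⟩ := le_iff_exists_add.1 ht
    exact ⟨t, t', rfl, by rw [Multiset.sum_add]; abel⟩
  · rintro ⟨t, t', rfl, rfl⟩
    exact ⟨t, Multiset.le_add_right t t', by rw [Multiset.sum_add]; abel⟩

theorem mem_subseqSums_map_iff [AddCommMonoid α] {β : Type*} {f : β → α} {k : ℕ}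
    {b : Multiset β} {y : α} :
    y ∈ subseqSums k (b.map f) ↔ ∃ u ≤ b, Multiset.card u = k ∧ (u.map f).sum = y := by
  simp only [subseqSums, Set.mem_ofPred_eq, Multiset.le_map_iff]
  constructor
  · rintro ⟨_, ⟨u, hu, rfl⟩, hcard, rfl⟩
    exact ⟨u, hu, by simpa using hcard, rfl⟩
  · rintro ⟨u, hu, hcard, rfl⟩
    exact ⟨_, ⟨u, hu, rfl⟩, by simpa using hcard, rfl⟩

end signedSums

section dihedralExponents

variable {α : Type*}

/-- The exponents `z` with `τ^ℓ α^z ∈ π(S)`, for `a` and `b` the `+`-values of the rotations and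
of the `ℓ` reflections of `S`: the terms of `a` take free signs, those of `b` alternating signs,
`⌈ℓ/2⌉` of them positive. -/
def dihedralExponents [AddCommGroup α] (a b : Multiset α) : Set α :=
  {z | ∃ t t' s w, a = t + t' ∧ b = s + w ∧ Multiset.card w ≤ Multiset.card s ∧
    Multiset.card s ≤ Multiset.card w + 1 ∧ z = t.sum - t'.sum + (s.sum - w.sum)}

variable [AddCommGroup α]

theorem zero_mem_dihedralExponents_zero : (0 : α) ∈ dihedralExponents 0 0 :=
  ⟨0, 0, 0, 0, rfl, rfl, le_rfl, zero_le_one, by simp⟩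

theorem dihedralExponents_cons_left {a b : Multiset α} {z : α} (x : α)
    (hz : z ∈ dihedralExponents a b) :
    (-1 : ℤˣ) ^ Multiset.card b • x + z ∈ dihedralExponents (x ::ₘ a) b := by
  obtain ⟨t, t', s, w, rfl, rfl, hws, hsw, rfl⟩ := hz
  rcases Nat.even_or_odd (Multiset.card (s + w)) with hpar | hpar
  · refine ⟨x ::ₘ t, t', s, w, by simp, rfl, hws, hsw, ?_⟩
    rw [hpar.neg_one_pow, one_smul, Multiset.sum_cons]
    abel
  · refine ⟨t, x ::ₘ t', s, w, by simp, rfl, hws, hsw, ?_⟩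
    rw [hpar.neg_one_pow, Units.neg_smul, one_smul, Multiset.sum_cons]
    abel

theorem dihedralExponents_cons_right {a b : Multiset α} {z : α} (y : α)
    (hz : z ∈ dihedralExponents a b) :
    (-1 : ℤˣ) ^ Multiset.card b • y + z ∈ dihedralExponents a (y ::ₘ b) := by
  obtain ⟨t, t', s, w, rfl, rfl, hws, hsw, rfl⟩ := hz
  rcases hws.eq_or_lt with hcard | hcard
  · have hpar : Even (Multiset.card (s + w)) := ⟨Multiset.card s, by simp [hcard]⟩
    refine ⟨t, t', y ::ₘ s, w, rfl, by simp, by rw [Multiset.card_cons]; omega,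
      by rw [Multiset.card_cons]; omega, ?_⟩
    rw [hpar.neg_one_pow, one_smul, Multiset.sum_cons]
    abel
  · have hpar : Odd (Multiset.card (s + w)) := ⟨Multiset.card w, by rw [Multiset.card_add]; omega⟩
    refine ⟨t, t', s, y ::ₘ w, rfl, by simp, by rw [Multiset.card_cons]; omega,
      by rw [Multiset.card_cons]; omega, ?_⟩
    rw [hpar.neg_one_pow, Units.neg_smul, one_smul, Multiset.sum_cons]
    abel

theorem exists_subseqSums_iff_balanced {R : Type*} [CommRing R] (b : Multiset R) (z : R) :
    (∃ y ∈ subseqSums (Multiset.card b / 2) (b.map fun v => 2 * v),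
        z = (-1) ^ Multiset.card b * y - (-1) ^ Multiset.card b * b.sum) ↔
      ∃ s w, b = s + w ∧ Multiset.card w ≤ Multiset.card s ∧
        Multiset.card s ≤ Multiset.card w + 1 ∧ z = s.sum - w.sum := by
  have hsum (u : Multiset R) : (u.map fun v => 2 * v).sum = 2 * u.sum := by
    rw [Multiset.sum_map_mul_left, Multiset.map_id']
  simp only [mem_subseqSums_map_iff, hsum]
  constructor
  · rintro ⟨_, ⟨u, hu, hcard, rfl⟩, rfl⟩
    obtain ⟨u', rfl⟩ := le_iff_exists_add.1 hu
    rw [Multiset.card_add] at hcard ⊢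
    rw [Multiset.sum_add]
    rcases Nat.even_or_odd (Multiset.card u + Multiset.card u') with hpar | hpar
    · have := Nat.even_iff.1 hpar
      refine ⟨u, u', rfl, by omega, by omega, ?_⟩
      rw [hpar.neg_one_pow]
      ring
    · have := Nat.odd_iff.1 hpar
      refine ⟨u', u, add_comm _ _, by omega, by omega, ?_⟩
      rw [hpar.neg_one_pow]
      ring
  · rintro ⟨s, w, rfl, hws, hsw, rfl⟩
    rw [Multiset.card_add, Multiset.sum_add]
    rcases hws.eq_or_lt with hcard | hcard
    · have hpar : Even (Multiset.card s + Multiset.card w) := ⟨_, by rw [hcard]⟩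
      refine ⟨_, ⟨s, Multiset.le_add_right s w, by omega, rfl⟩, ?_⟩
      rw [hpar.neg_one_pow]
      ring
    · have hpar : Odd (Multiset.card s + Multiset.card w) := ⟨Multiset.card w, by omega⟩
      refine ⟨_, ⟨w, Multiset.le_add_left w s, by omega, rfl⟩, ?_⟩
      rw [hpar.neg_one_pow]
      ring

theorem mem_dihedralExponents_iff {R : Type*} [CommRing R] (a b : Multiset R) (z : R) :
    z ∈ dihedralExponents a b ↔
      ∃ x ∈ signedSums a, ∃ y ∈ subseqSums (Multiset.card b / 2) (b.map fun v => 2 * v),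
        z = x + (-1) ^ Multiset.card b * y - (-1) ^ Multiset.card b * b.sum := by
  simp only [add_sub_assoc]
  constructor
  · rintro ⟨t, t', s, w, rfl, rfl, hws, hsw, rfl⟩
    obtain ⟨y, hy, hyz⟩ := (exists_subseqSums_iff_balanced _ _).2 ⟨s, w, rfl, hws, hsw, rfl⟩
    exact ⟨_, mem_signedSums_iff.2 ⟨t, t', rfl, rfl⟩, y, hy, by rw [← hyz]⟩
  · rintro ⟨x, hx, y, hy, rfl⟩
    obtain ⟨t, t', rfl, rfl⟩ := mem_signedSums_iff.1 hx
    obtain ⟨s, w, rfl, hws, hsw, hz⟩ := (exists_subseqSums_iff_balanced _ _).1 ⟨y, hy, rfl⟩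
    exact ⟨t, t', s, w, rfl, rfl, hws, hsw, by rw [hz]⟩

end dihedralExponents

end ProductOne

namespace DihedralGroup

open ProductOne

variable {n : ℕ}

def sign : DihedralGroup n →* ℤˣ where
  toFun
    | r _ => 1
    | sr _ => -1
  map_one' := rfl
  map_mul' := by rintro (i | i) (j | j) <;> simp [r_mul_r, r_mul_sr, sr_mul_r, sr_mul_sr]

@[simp] theorem sign_r (i : ZMod n) : sign (r i) = 1 := rfl

@[simp] theorem sign_sr (i : ZMod n) : sign (sr i) = -1 := rfl

-- The paper's `g⁺`, with `sr i = τ α^i`.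
def index : DihedralGroup n → ZMod n
  | r i => i
  | sr i => i

@[simp] theorem index_r (i : ZMod n) : index (r i) = i := rfl

@[simp] theorem index_sr (i : ZMod n) : index (sr i) = i := rfl

theorem index_mul (g h : DihedralGroup n) : index (g * h) = sign h • index g + index h := by
  rcases g with i | i <;> rcases h with j | j <;>
    simp [r_mul_r, r_mul_sr, sr_mul_r, sr_mul_sr] <;> abel

theorem eq_sr_zero_pow_mul_r_index {g : DihedralGroup n} {k : ℕ} (hg : sign g = (-1) ^ k) :
    g = sr 0 ^ k * r (index g) := by
  have hsq : (sr 0 : DihedralGroup n) ^ 2 = 1 := by rw [sq, sr_mul_self]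
  obtain ⟨m, rfl | rfl⟩ := Nat.even_or_odd' k <;> rcases g with i | i <;>
    simp_all [pow_succ, pow_mul, sr_mul_r]

-- `rotations S` and `reflections S` are the paper's `S⁺_{⟨α⟩}` and `S⁺_{τ⟨α⟩}`.
def rotations (S : Multiset (DihedralGroup n)) : Multiset (ZMod n) :=
  S.filterMap fun
    | r i => some i
    | sr _ => none

def reflections (S : Multiset (DihedralGroup n)) : Multiset (ZMod n) :=
  S.filterMap fun
    | r _ => none
    | sr i => some i

@[simp] theorem rotations_cons_r (i : ZMod n) (S : Multiset (DihedralGroup n)) :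
    rotations (r i ::ₘ S) = i ::ₘ rotations S :=
  Multiset.filterMap_cons_some _ _ _ rfl

@[simp] theorem rotations_cons_sr (i : ZMod n) (S : Multiset (DihedralGroup n)) :
    rotations (sr i ::ₘ S) = rotations S :=
  Multiset.filterMap_cons_none _ _ rfl

@[simp] theorem reflections_cons_r (i : ZMod n) (S : Multiset (DihedralGroup n)) :
    reflections (r i ::ₘ S) = reflections S :=
  Multiset.filterMap_cons_none _ _ rfl

@[simp] theorem reflections_cons_sr (i : ZMod n) (S : Multiset (DihedralGroup n)) :
    reflections (sr i ::ₘ S) = i ::ₘ reflections S :=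
  Multiset.filterMap_cons_some _ _ _ rfl

theorem rotations_map_r_add_map_sr (a b : Multiset (ZMod n)) :
    rotations (a.map r + b.map sr) = a := by
  induction b using Multiset.induction_on <;> simp_all [rotations, Multiset.filterMap_map,
    Function.comp_def]

theorem reflections_map_r_add_map_sr (a b : Multiset (ZMod n)) :
    reflections (a.map r + b.map sr) = b := by
  induction a using Multiset.induction_on <;> simp_all [reflections, Multiset.filterMap_map,
    Function.comp_def]

theorem sign_of_mem_piSet {g : DihedralGroup n} {S : Multiset (DihedralGroup n)}
    (hg : g ∈ piSet S) : sign g = (-1) ^ Multiset.card (reflections S) := by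
  obtain ⟨l, rfl, rfl⟩ := hg
  induction l with
  | nil => rfl
  | cons g l ih =>
    rw [List.prod_cons, map_mul, ih, ← Multiset.cons_coe]
    rcases g with i | i <;> simp [-Multiset.cons_coe, pow_succ]

theorem index_mem_dihedralExponents {g : DihedralGroup n} {S : Multiset (DihedralGroup n)}
    (hg : g ∈ piSet S) : index g ∈ dihedralExponents (rotations S) (reflections S) := by
  obtain ⟨l, rfl, rfl⟩ := hg
  induction l with
  | nil => exact zero_mem_dihedralExponents_zero
  | cons g l ih =>
    rw [List.prod_cons, index_mul, sign_of_mem_piSet (prod_mem_piSet l), ← Multiset.cons_coe]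
    rcases g with i | i
    · simpa [-Multiset.cons_coe] using dihedralExponents_cons_left i ih
    · simpa [-Multiset.cons_coe] using dihedralExponents_cons_right i ih

theorem r_sum_mem_piSet (a : Multiset (ZMod n)) : r a.sum ∈ piSet (a.map r) := by
  induction a using Multiset.induction_on with
  | empty => exact one_mem_piSet_zero
  | cons x a ih =>
    rw [Multiset.sum_cons, ← r_mul_r, Multiset.map_cons, ← Multiset.singleton_add]
    exact mul_mem_piSet_add (mem_piSet_singleton _) ih

/-- Consecutive reflections pair up to rotations, `sr u * sr y = r (y - u)`. -/
theorem exists_mem_piSet_map_sr {s w : Multiset (ZMod n)}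
    (hws : Multiset.card w ≤ Multiset.card s) (hsw : Multiset.card s ≤ Multiset.card w + 1) :
    ∃ g ∈ piSet ((s + w).map sr), index g = s.sum - w.sum := by
  induction w using Multiset.induction_on generalizing s with
  | empty =>
    rcases Nat.le_one_iff_eq_zero_or_eq_one.1 (by simpa using hsw) with hs | hs
    · rw [Multiset.card_eq_zero.1 hs]
      exact ⟨1, one_mem_piSet_zero, by simp [one_def, -r_zero]⟩
    · obtain ⟨y, rfl⟩ := Multiset.card_eq_one.1 hs
      exact ⟨sr y, by simpa using mem_piSet_singleton (sr y), by simp⟩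
  | cons u w ih =>
    rw [Multiset.card_cons] at hws hsw
    obtain ⟨y, hy⟩ := (Multiset.card_pos_iff_exists_mem (s := s)).1 (by omega)
    obtain ⟨s, rfl⟩ := Multiset.exists_cons_of_mem hy
    rw [Multiset.card_cons] at hws hsw
    obtain ⟨g, hg, hgi⟩ := ih (s := s) (by omega) (by omega)
    refine ⟨g * (sr u * sr y), ?_, ?_⟩
    · convert mul_mem_piSet_add hg (mul_mem_piSet_add (mem_piSet_singleton (sr u))
        (mem_piSet_singleton (sr y))) using 2
      simp only [← Multiset.singleton_add, Multiset.map_add, Multiset.map_singleton]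
      abel
    · rw [sr_mul_sr, index_mul, hgi]
      simp only [sign_r, one_smul, index_r, Multiset.sum_cons]
      abel

/-- `r x * sr v * r x' = sr (v - x + x')`: the rotations gathered around the last reflection take
the signs of our choice. -/
theorem exists_mem_piSet_index_eq {a b : Multiset (ZMod n)} (hb : b ≠ 0) {z : ZMod n}
    (hz : z ∈ dihedralExponents a b) : ∃ g ∈ piSet (a.map r + b.map sr), index g = z := by
  obtain ⟨t, t', s, w, rfl, rfl, hws, hsw, rfl⟩ := hz
  have hcard := Multiset.card_pos.2 hb
  rw [Multiset.card_add] at hcard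
  obtain ⟨v, hv⟩ := (Multiset.card_pos_iff_exists_mem (s := s)).1 (by omega)
  obtain ⟨s, rfl⟩ := Multiset.exists_cons_of_mem hv
  rw [Multiset.card_cons] at hws hsw
  obtain ⟨g, hg, hgi⟩ := exists_mem_piSet_map_sr (s := w) (w := s) (by omega) (by omega)
  refine ⟨g * (r t'.sum * sr v * r t.sum), ?_, ?_⟩
  · convert mul_mem_piSet_add hg (mul_mem_piSet_add (mul_mem_piSet_add (r_sum_mem_piSet t')
      (mem_piSet_singleton (sr v))) (r_sum_mem_piSet t)) using 2
    simp only [← Multiset.singleton_add, Multiset.map_add, Multiset.map_singleton]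
    abel
  · rw [index_mul, hgi, r_mul_sr, sr_mul_r]
    simp only [sign_sr, Units.neg_smul, one_smul, index_sr, Multiset.sum_cons]
    abel

end DihedralGroup

open ProductOne DihedralGroup in
theorem piSet_dihedral_general (n : ℕ) (a b : Multiset (ZMod n)) (hb : b ≠ 0) :
    piSet (a.map DihedralGroup.r + b.map DihedralGroup.sr) =
      (fun z : ZMod n =>
          (DihedralGroup.sr 0 : DihedralGroup n) ^ Multiset.card b * DihedralGroup.r z) ''
        {z : ZMod n | ∃ x ∈ signedSums a,
          ∃ y ∈ subseqSums (Multiset.card b / 2) (b.map fun v => 2 * v),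
            z = x + (-1 : ZMod n) ^ Multiset.card b * y -
                (-1 : ZMod n) ^ Multiset.card b * b.sum} := by
  have normal_form {g} (hg : g ∈ piSet (a.map r + b.map sr)) :
      sr 0 ^ Multiset.card b * r (index g) = g := by
    rw [← reflections_map_r_add_map_sr a b]
    exact (eq_sr_zero_pow_mul_r_index (sign_of_mem_piSet hg)).symm
  ext g
  constructor
  · intro hg
    have hz := index_mem_dihedralExponents hg
    rw [rotations_map_r_add_map_sr, reflections_map_r_add_map_sr] at hz
    exact ⟨index g, (mem_dihedralExponents_iff a b _).1 hz, normal_form hg⟩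
  · rintro ⟨z, hz, rfl⟩
    obtain ⟨g, hg, rfl⟩ := exists_mem_piSet_index_eq hb ((mem_dihedralExponents_iff a b z).2 hz)
    simpa only [normal_form hg] using hg

open ProductOne DihedralGroup in
/-- For a sequence `S` over the dihedral group `D_{2n}` (`n ≥ 3`) not
consisting solely of terms from `⟨α⟩`, written as `S_{⟨α⟩} = α^{x₁} ⋯ α^{x_s}` (encoded
by the multiset `a`) together with the multiset `b` of the `+`-values of `S_{τ⟨α⟩}`
(so `S_{τ⟨α⟩} = (τα^{y})_{y ∈ b}` and `ℓ = |b| ≥ 1`), one has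
`π(S) = τ^ℓ ({x₁,-x₁} + ⋯ + {x_s,-x_s} + (-1)^ℓ Σ_{⌊ℓ/2⌋}(2 S⁺_{τ⟨α⟩})
        - (-1)^ℓ σ(S⁺_{τ⟨α⟩}))^*`. -/
theorem piSet_dihedral (n : ℕ) (hn : 3 ≤ n) (a b : Multiset (ZMod n)) (hb : b ≠ 0) :
    piSet (a.map DihedralGroup.r + b.map DihedralGroup.sr) =
      (fun z : ZMod n =>
          (DihedralGroup.sr 0 : DihedralGroup n) ^ Multiset.card b * DihedralGroup.r z) ''
        {z : ZMod n | ∃ x ∈ signedSums a,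
          ∃ y ∈ subseqSums (Multiset.card b / 2) (b.map fun v => 2 * v),
            z = x + (-1 : ZMod n) ^ Multiset.card b * y -
                (-1 : ZMod n) ^ Multiset.card b * b.sum} :=
  piSet_dihedral_general n a b hb
end

section
/- Let G = ⟨α, τ : α^n = τ^2 = 1, τα = α^{-1}τ⟩ be the dihedral group of order 2n with n ≥ 3. If U is an atom of B(G) with |U_{τ⟨α⟩}| > 2, then the maximum multiplicity of a term in U_{τ⟨α⟩} satisfies h(U_{τ⟨α⟩}) ≤ |U_{τ⟨α⟩}|/2. -/
/-! If one reflection `sr x` made up more than half of the reflections of an atom `U`, then in a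
product-one ordering of `U`, read cyclically, two copies of `sr x` would be consecutive among the
reflections: a block `sr x · w · sr x` with `w` a product of rotations, say `r c`. The block
equals `r (-c)`, and moving `w` to just behind the next reflection `sr y` has the same effect,
since `sr y · r c = r (-c) · sr y`. So the remaining terms still have a product-one ordering,
and `U` splits off the product-one sequence `sr x · sr x`, contradicting atomicity. -/

namespace List

variable {α : Type*}

section Count

variable [DecidableEq α] {g : α}

theorem two_mul_count_le_of_not_infix {l : List α} (h : ¬[g, g] <:+: l) :
    2 * l.count g ≤ l.length + if l.head? = some g then 1 else 0 := by
  induction l with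
  | nil => simp
  | cons a t ih =>
    have ht := ih fun hi => h (hi.trans (infix_cons infix_rfl))
    by_cases hag : a = g
    · subst hag
      have : t.head? ≠ some a := by
        intro hh
        obtain ⟨t', rfl⟩ : ∃ t', t = a :: t' := by
          cases t <;> simp_all
        exact h (prefix_append [a, a] t').isInfix
      simp only [this, if_false] at ht
      simp only [count_cons_self, length_cons, head?_cons, if_pos]
      omega
    · have : 2 * t.count g ≤ t.length + 1 := by split at ht <;> omega
      simp only [count_cons_of_ne hag, length_cons, head?_cons, Option.some.injEq, hag,
        if_false]
      omega

theorem exists_isRotated_cons_cons {l : List α} (hl : 2 ≤ l.length)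
    (h : l.length < 2 * l.count g) : ∃ t, l ~r g :: g :: t := by
  by_cases hi : [g, g] <:+: l
  · obtain ⟨s, t, rfl⟩ := hi
    exact ⟨t ++ s, by simpa using isRotated_append (l := s) (l' := [g, g] ++ t)⟩
  have hhead := two_mul_count_le_of_not_infix hi
  have hlast := two_mul_count_le_of_not_infix (l := l.reverse)
    fun h' => hi (by simpa using reverse_infix.2 h')
  rw [count_reverse, length_reverse] at hlast
  split at hhead <;> split at hlast <;> try omega
  rename_i hh hr
  obtain ⟨m, rfl⟩ : ∃ m, l = g :: m := by cases l <;> simp_all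
  obtain ⟨q, y, rfl⟩ : ∃ q y, m = q ++ [y] := by
    rcases m.eq_nil_or_concat' with rfl | h
    · simp at hl
    · exact h
  rw [show y = g by simpa using hr]
  exact ⟨q, by simpa using isRotated_append (l := g :: q) (l' := [g])⟩

end Count

variable {p : α → Bool}

theorem exists_isRotated_filter_eq {l σ : List α} (h : l.filter p ~r σ) :
    ∃ l', l ~r l' ∧ l'.filter p = σ := by
  obtain ⟨k, rfl⟩ := h
  induction k with
  | zero => exact ⟨l, IsRotated.refl l, by simp⟩
  | succ k ih =>
    obtain ⟨l', hl', hk⟩ := ih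
    rw [← rotate_rotate, ← hk]
    cases hρ : l'.filter p with
    | nil => exact ⟨l', hl', by simp [hρ]⟩
    | cons a ρ =>
      obtain ⟨l₁, l₂, rfl, h₁, ha, h₂⟩ := filter_eq_cons_iff.1 hρ
      refine ⟨l₂ ++ l₁ ++ [a], hl'.trans (isRotated_append.trans ?_), ?_⟩
      · simpa using isRotated_append (l := [a]) (l' := l₂ ++ l₁)
      · simp [filter_append, h₂, filter_eq_nil_iff.2 h₁, ha]

theorem exists_isRotated_cons_of_filter {l σ : List α} {a : α} (h : l.filter p ~r a :: σ) :
    ∃ v, l ~r a :: v ∧ v.filter p = σ := by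
  obtain ⟨l', hl', hσ⟩ := exists_isRotated_filter_eq h
  obtain ⟨l₁, l₂, rfl, h₁, -, h₂⟩ := filter_eq_cons_iff.1 hσ
  exact ⟨l₂ ++ l₁, hl'.trans (by simpa using isRotated_append (l := l₁) (l' := a :: l₂)),
    by simp [filter_append, h₂, filter_eq_nil_iff.2 h₁]⟩

end List

namespace ProductOne

theorem IsAtomSeq.not_isProductOne_add {G : Type*} [Group G] {A B : Multiset G}
    (hU : IsAtomSeq (A + B)) (hA : A ≠ 0) (hB : B ≠ 0) (hA₁ : IsProductOne A) :
    ¬IsProductOne B :=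
  fun hB₁ => (hU.2.2 A B rfl hA₁ hB₁).elim hA hB

theorem maxMultiplicity_le {α : Type*} [DecidableEq α] {S : Multiset α} {k : ℕ}
    (h : ∀ a, S.count a ≤ k) : maxMultiplicity S ≤ k :=
  Finset.sup_le fun a _ => le_of_eq_of_le (by congr) (h a)

end ProductOne

namespace DihedralGroup

open ProductOne

variable {n : ℕ}

def isReflection : DihedralGroup n → Bool
  | r _ => false
  | sr _ => true

@[simp] theorem isReflection_r (i : ZMod n) : isReflection (r i) = false := rfl

@[simp] theorem isReflection_sr (i : ZMod n) : isReflection (sr i) = true := rfl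

theorem exists_prod_eq_r {w : List (DihedralGroup n)} (hw : ∀ g ∈ w, ¬isReflection g = true) :
    ∃ c, w.prod = r c := by
  induction w with
  | nil => exact ⟨0, rfl⟩
  | cons g w ih =>
    obtain ⟨c, hc⟩ := ih fun g' hg' => hw g' (.tail _ hg')
    cases g with
    | r i => exact ⟨i + c, by simp [hc, r_mul_r]⟩
    | sr i => exact absurd rfl (hw _ (.head _))

theorem filter_isReflection_map_r_add_map_sr (a b : Multiset (ZMod n)) :
    (a.map r + b.map sr).filter (isReflection ·) = b.map sr := by
  simp [Multiset.filter_map, Function.comp_def]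

theorem prod_eq_one_of_prod_sr_pair_eq_one {x : ZMod n} {y : DihedralGroup n}
    {w u v : List (DihedralGroup n)} (hw : ∀ g ∈ w, ¬isReflection g = true)
    (hu : ∀ g ∈ u, ¬isReflection g = true) (hy : isReflection y = true)
    (h : (sr x :: w ++ sr x :: u ++ y :: v).prod = 1) : (u ++ y :: w ++ v).prod = 1 := by
  obtain ⟨c, hc⟩ := exists_prod_eq_r hw
  obtain ⟨d, hd⟩ := exists_prod_eq_r hu
  cases y with
  | r i => simp at hy
  | sr i =>
    simp only [List.prod_append, List.prod_cons, hc, hd] at h ⊢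
    rw [← h]
    simp only [← mul_assoc, r_mul_sr, sr_mul_r, sr_mul_sr]
    congr 2
    ring

theorem two_mul_count_sr_le_of_isAtomSeq {l : List (DihedralGroup n)}
    (hU : IsAtomSeq (l : Multiset (DihedralGroup n))) (hl : l.prod = 1)
    (h3 : 2 < (l.filter isReflection).length) (x : ZMod n) :
    2 * (l.filter isReflection).count (sr x) ≤ (l.filter isReflection).length := by
  by_contra! hx
  obtain ⟨_ | ⟨y, t⟩, ht⟩ := List.exists_isRotated_cons_cons (by omega) hx
  · simp [ht.perm.length_eq] at h3
  obtain ⟨v, hlv, hv⟩ := List.exists_isRotated_cons_of_filter ht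
  obtain ⟨w, v, rfl, hw, -, hv⟩ := List.filter_eq_cons_iff.1 hv
  obtain ⟨u, v, rfl, hu, hy, -⟩ := List.filter_eq_cons_iff.1 hv
  have hsplit : (l : Multiset (DihedralGroup n)) = ↑[sr x, sr x] + ↑(u ++ y :: w ++ v) := by
    rw [Multiset.coe_add, Multiset.coe_eq_coe]
    refine hlv.perm.trans ?_
    simp only [List.perm_iff_count, List.count_append, List.count_cons, List.count_nil]
    omega
  obtain ⟨k, hk⟩ := hlv
  refine (hsplit ▸ hU).not_isProductOne_add (by simp) (by simp) ⟨[sr x, sr x], rfl, by simp⟩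
    ⟨_, rfl, prod_eq_one_of_prod_sr_pair_eq_one (x := x) hw hu hy ?_⟩
  simpa [hk] using List.prod_rotate_eq_one_of_prod_eq_one hl k

end DihedralGroup

open ProductOne DihedralGroup in
theorem maxMultiplicity_le_half_general (n : ℕ) (a b : Multiset (ZMod n))
    (hU : IsAtomSeq (a.map DihedralGroup.r + b.map DihedralGroup.sr))
    (hb : 2 < Multiset.card b) :
    2 * maxMultiplicity (b.map DihedralGroup.sr) ≤ Multiset.card b := by
  obtain ⟨l, hl, hl₁⟩ := hU.2.1
  have hρ : ((l.filter isReflection : List _) : Multiset _) = b.map sr := by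
    rw [← filter_isReflection_map_r_add_map_sr a, ← hl, Multiset.filter_coe]
    simp
  have hlen : (l.filter isReflection).length = Multiset.card b := by
    rw [← Multiset.coe_card, hρ, Multiset.card_map]
  have hcount (x : ZMod n) : 2 * (b.map sr).count (sr x) ≤ Multiset.card b := by
    rw [← hρ, Multiset.coe_count, ← hlen]
    exact two_mul_count_sr_le_of_isAtomSeq (hl ▸ hU) hl₁ (hlen ▸ hb) x
  have : maxMultiplicity (b.map sr) ≤ Multiset.card b / 2 := by
    refine maxMultiplicity_le fun g => ?_
    cases g with
    | r i => simp
    | sr x => have := hcount x; omega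
  omega

open ProductOne DihedralGroup in
/-- If `U` is an atom of `B(D_{2n})` (`n ≥ 3`), written as
`U = U_{⟨α⟩} + U_{τ⟨α⟩}` with `U_{τ⟨α⟩} = b.map sr`, and `|U_{τ⟨α⟩}| > 2`, then
`h(U_{τ⟨α⟩}) ≤ |U_{τ⟨α⟩}|/2`. -/
theorem maxMultiplicity_le_half (n : ℕ) (hn : 3 ≤ n) (a b : Multiset (ZMod n))
    (hU : IsAtomSeq (a.map DihedralGroup.r + b.map DihedralGroup.sr))
    (hb : 2 < Multiset.card b) :
    2 * maxMultiplicity (b.map DihedralGroup.sr) ≤ Multiset.card b :=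
  maxMultiplicity_le_half_general n a b hU hb
end

section
/- Let G = ⟨α, τ : α^n = τ^2 = 1, τα = α^{-1}τ⟩ be the dihedral group of order 2n with n ≥ 3, let H ≤ ⟨α⟩ be a subgroup, and let U be an atom of B(G) with |U| > 1. Then the subsequence U_H of U consisting of the terms lying in H has length |U_H| ≤ 2|H| − 2. -/
/-!
Write the atom `U` as a product-one list and push every term lying in `H` to the end of the
list, past the suffix that follows it. Since each element of `G` conjugates `H` either
trivially or by inversion, the term arrives there as itself or as its inverse, according to its
suffix; since `H` is commutative, removing terms of `H` does not change the kind of the others.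
If `|U_H| ≥ 2|H| - 1`, one kind occurs at least `|H|` times, and by prefix-product pigeonhole
some nonempty family of at most `|H|` of these terms has product one. Removing it leaves a
product-one list, so by atomicity `U` consists of at most `|H|` terms, which contradicts
`|U| ≥ |U_H| ≥ 2|H| - 1` and `|U| > 1`.
-/

theorem List.exists_infix_prod_eq_one_of_card_le {α : Type*} [Group α] [Finite α] (l : List α)
    (hl : Nat.card α ≤ l.length) :
    ∃ t, t <:+: l ∧ t ≠ [] ∧ t.length ≤ Nat.card α ∧ t.prod = 1 := by
  have : Fintype α := Fintype.ofFinite α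
  have key : ∀ i j : ℕ, i < j → j ≤ Nat.card α → (l.take i).prod = (l.take j).prod →
      ∃ t, t <:+: l ∧ t ≠ [] ∧ t.length ≤ Nat.card α ∧ t.prod = 1 := by
    intro i j hij hj heq
    have hsplit : l.take j = l.take i ++ (l.take j).drop i := by
      conv_lhs => rw [← List.take_append_drop i (l.take j)]
      rw [List.take_take, min_eq_left hij.le]
    have hlen : ((l.take j).drop i).length = j - i := by
      simp only [List.length_drop, List.length_take]; omega
    refine ⟨(l.take j).drop i, (List.drop_suffix i _).isInfix.trans (List.take_prefix j l).isInfix,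
      ?_, by omega, ?_⟩
    · rw [← List.length_pos_iff]; omega
    · rw [hsplit, List.prod_append, left_eq_mul] at heq
      exact heq
  obtain ⟨i, j, hne, heq⟩ := Fintype.exists_ne_map_eq_of_card_lt
    (fun i : Fin (Nat.card α + 1) => (l.take i).prod) (by simp [Nat.card_eq_fintype_card])
  rcases Nat.lt_or_gt_of_ne (Fin.val_ne_of_ne hne) with h | h
  · exact key i j h (by omega) heq
  · exact key j i h (by omega) heq.symm

theorem Multiset.exists_le_prod_eq_one_of_card_le {α : Type*} [CommGroup α] [Finite α]
    (S : Multiset α) (hS : Nat.card α ≤ card S) :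
    ∃ T ≤ S, T ≠ 0 ∧ card T ≤ Nat.card α ∧ T.prod = 1 := by
  obtain ⟨t, hinfix, hne, hlen, hprod⟩ :=
    S.toList.exists_infix_prod_eq_one_of_card_le (by rwa [Multiset.length_toList])
  refine ⟨t, ?_, by simpa using hne, by simpa using hlen, by simpa using hprod⟩
  rw [← Multiset.coe_toList S]
  exact Multiset.coe_le.2 hinfix.sublist.subperm

theorem Subgroup.isMulCommutative_of_le {G : Type*} [Group G] {H K : Subgroup G}
    [IsMulCommutative K] (hHK : H ≤ K) : IsMulCommutative H :=
  .of_setLike_mul_comm fun _ ha _ hb => setLike_mul_comm (hHK ha) (hHK hb)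

namespace ProductOne

open scoped IsMulCommutative
open Multiset (card)

variable {G : Type*} [Group G]

theorem isProductOne_map_coe {H : Subgroup G} [IsMulCommutative H] {T : Multiset H}
    (hT : T.prod = 1) : IsProductOne (T.map ((↑) : H → G)) :=
  ⟨T.toList.map (↑), by rw [← Multiset.map_coe, Multiset.coe_toList],
    by rw [← Subgroup.val_list_prod, Multiset.prod_toList, hT, Subgroup.coe_one]⟩

def ConjActsAs (H : Subgroup G) (φ : H →* H) (g : G) : Prop :=
  ∀ h : H, g⁻¹ * h * g = φ h

open scoped Classical in
noncomputable def suffixClass (H : Subgroup G) (φ : H →* H) : List G → Multiset H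
  | [] => 0
  | x :: l =>
    if hx : x ∈ H ∧ ConjActsAs H φ l.prod then ⟨x, hx.1⟩ ::ₘ suffixClass H φ l
    else suffixClass H φ l

theorem exists_eq_add_of_le_suffixClass {H : Subgroup G} [IsMulCommutative H] {φ : H →* H}
    (l : List G) {T : Multiset H} (hT : T ≤ suffixClass H φ l) :
    ∃ l' : List G, (l' : Multiset G) + T.map (↑) = (l : Multiset G) ∧
      l.prod = l'.prod * φ T.prod := by
  classical
  induction l generalizing T with
  | nil =>
    obtain rfl : T = 0 := Multiset.le_zero.1 hT
    exact ⟨[], by simp, by simp⟩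
  | cons x l ih =>
    have keep : T ≤ suffixClass H φ l →
        ∃ l' : List G, (l' : Multiset G) + T.map (↑) = ((x :: l : List G) : Multiset G) ∧
          (x :: l).prod = l'.prod * φ T.prod := fun hT' => by
      obtain ⟨l', hl', hprod⟩ := ih hT'
      refine ⟨x :: l', ?_, ?_⟩
      · rw [← Multiset.cons_coe, Multiset.cons_add, hl', Multiset.cons_coe]
      · rw [List.prod_cons, List.prod_cons, hprod, mul_assoc]
    by_cases hx : x ∈ H ∧ ConjActsAs H φ l.prod
    · rw [suffixClass, dif_pos hx] at hT
      set x' : H := ⟨x, hx.1⟩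
      by_cases hxT : x' ∈ T
      · obtain ⟨l', hl', hprod⟩ := ih (Multiset.erase_le_iff_le_cons.2 hT)
        refine ⟨l', ?_, ?_⟩
        · rw [← Multiset.cons_erase hxT, Multiset.map_cons, Multiset.add_cons, hl',
            Multiset.cons_coe]
        · calc (x :: l).prod = l.prod * (l.prod⁻¹ * x * l.prod) := by simp [mul_assoc]
            _ = l'.prod * (φ (T.erase x').prod * φ x' : H) := by
                rw [hx.2 x', hprod, Subgroup.coe_mul, mul_assoc]
            _ = l'.prod * φ T.prod := by
                rw [mul_comm, ← map_mul, Multiset.prod_erase hxT]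
      · exact keep ((Multiset.le_cons_of_notMem hxT).1 hT)
    · rw [suffixClass, dif_neg hx] at hT
      exact keep hT

theorem card_restrictTo_le_card_suffixClass_add {H : Subgroup G} {φ ψ : H →* H}
    (hH : ∀ g : G, ConjActsAs H φ g ∨ ConjActsAs H ψ g) (l : List G) :
    card (restrictTo (H : Set G) (l : Multiset G)) ≤
      card (suffixClass H φ l) + card (suffixClass H ψ l) := by
  classical
  induction l with
  | nil => simp [restrictTo, suffixClass]
  | cons x l ih =>
    have mono : ∀ χ : H →* H, card (suffixClass H χ l) ≤ card (suffixClass H χ (x :: l)) := by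
      intro χ
      rw [suffixClass]
      split_ifs <;> simp
    have grow : ∀ χ : H →* H, x ∈ H → ConjActsAs H χ l.prod →
        card (suffixClass H χ (x :: l)) = card (suffixClass H χ l) + 1 := by
      intro χ hx hχ
      rw [suffixClass, dif_pos ⟨hx, hχ⟩, Multiset.card_cons]
    by_cases hx : x ∈ H
    · have hcons : restrictTo (H : Set G) ((x :: l : List G) : Multiset G) =
          x ::ₘ restrictTo (H : Set G) (l : Multiset G) := by
        simp [restrictTo, ← Multiset.cons_coe, hx]
      rw [hcons, Multiset.card_cons]
      rcases hH l.prod with h | h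
      · linarith [grow φ hx h, mono ψ]
      · linarith [grow ψ hx h, mono φ]
    · have hcons : restrictTo (H : Set G) ((x :: l : List G) : Multiset G) =
          restrictTo (H : Set G) (l : Multiset G) := by
        simp [restrictTo, hx]
      rw [hcons]
      linarith [mono φ, mono ψ]

theorem IsAtomSeq.card_le_of_le_card_suffixClass {H : Subgroup G} [IsMulCommutative H]
    [Finite H] {φ : H →* H} {U : Multiset G} (hU : IsAtomSeq U) {l : List G}
    (hlU : (l : Multiset G) = U) (hl : l.prod = 1)
    (hH : Nat.card H ≤ card (suffixClass H φ l)) : card U ≤ Nat.card H := by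
  obtain ⟨T, hTle, hT0, hTcard, hTprod⟩ := (suffixClass H φ l).exists_le_prod_eq_one_of_card_le hH
  obtain ⟨l', hsplit, hprod⟩ := exists_eq_add_of_le_suffixClass l hTle
  rw [hl, hTprod, map_one, Subgroup.coe_one, mul_one] at hprod
  rw [hlU] at hsplit
  rcases hU.2.2 _ _ hsplit.symm ⟨l', rfl, hprod.symm⟩ (isProductOne_map_coe hTprod) with h | h
  · rw [← hsplit, h, zero_add, Multiset.card_map]
    exact hTcard
  · exact absurd (Multiset.map_eq_zero.1 h) hT0

theorem card_restrictTo_le_of_conjActsAs_id_or_inv (H : Subgroup G) [IsMulCommutative H]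
    [Finite H] (hH : ∀ g : G, ConjActsAs H (MonoidHom.id H) g ∨ ConjActsAs H invMonoidHom g)
    {U : Multiset G} (hU : IsAtomSeq U) (hcard : 1 < card U) :
    card (restrictTo (H : Set G) U) ≤ 2 * Nat.card H - 2 := by
  obtain ⟨l, hlU, hl⟩ := hU.2.1
  have hsplit := card_restrictTo_le_card_suffixClass_add hH l
  have hrestrict : card (restrictTo (H : Set G) U) ≤ card U := by
    classical
    exact Multiset.card_le_card (Multiset.filter_le _ _)
  rw [hlU] at hsplit
  by_contra! hlt
  rcases le_or_gt (Nat.card H) (card (suffixClass H (MonoidHom.id H) l)) with h | h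
  · have := hU.card_le_of_le_card_suffixClass hlU hl h
    omega
  · have := hU.card_le_of_le_card_suffixClass (H := H) (φ := invMonoidHom) hlU hl (by omega)
    omega

end ProductOne

namespace DihedralGroup

open ProductOne

variable {n : ℕ}

theorem exists_eq_r_of_mem_zpowers_r_one {g : DihedralGroup n}
    (hg : g ∈ Subgroup.zpowers (r 1)) : ∃ i, g = r i := by
  obtain ⟨k, rfl⟩ := hg
  exact ⟨k, r_one_zpow k⟩

open scoped IsMulCommutative in
theorem conjActsAs_id_or_inv_of_le_zpowers_r_one {H : Subgroup (DihedralGroup n)}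
    [IsMulCommutative H] (hH : H ≤ Subgroup.zpowers (r 1)) (g : DihedralGroup n) :
    ConjActsAs H (MonoidHom.id H) g ∨ ConjActsAs H invMonoidHom g := by
  cases g with
  | r i =>
    left
    rintro ⟨h, hh⟩
    obtain ⟨j, rfl⟩ := exists_eq_r_of_mem_zpowers_r_one (hH hh)
    simp [inv_r, r_mul_r]
  | sr i =>
    right
    rintro ⟨h, hh⟩
    obtain ⟨j, rfl⟩ := exists_eq_r_of_mem_zpowers_r_one (hH hh)
    simp [inv_r, inv_sr, sr_mul_r, sr_mul_sr]

end DihedralGroup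

open ProductOne DihedralGroup in
/-- Let `H ≤ ⟨α⟩` be a subgroup of the dihedral group `D_{2n}`
(`n ≥ 3`), and `U` an atom of `B(D_{2n})` with `|U| > 1`. Then `|U_H| ≤ 2|H| - 2`. -/
theorem card_restrict_to_subgroup_of_rotations (n : ℕ) (hn : 3 ≤ n)
    (H : Subgroup (DihedralGroup n)) (hH : H ≤ Subgroup.zpowers (DihedralGroup.r 1))
    (U : Multiset (DihedralGroup n)) (hU : IsAtomSeq U) (hcard : 1 < Multiset.card U) :
    Multiset.card (restrictTo (H : Set (DihedralGroup n)) U) ≤ 2 * Nat.card H - 2 := by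
  have : NeZero n := ⟨by omega⟩
  have : IsMulCommutative H := Subgroup.isMulCommutative_of_le hH
  exact card_restrictTo_le_of_conjActsAs_id_or_inv H
    (conjActsAs_id_or_inv_of_le_zpowers_r_one hH) hU hcard
end
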